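/- arXiv:math/0612120 — 5 statements merged into one kernel-verified Lean document; each statement's English description precedes it below -/
import Mathlib

section
/- Let P be a bounded convex polygon in ℝ² with centre of mass at the origin, whose boundary in polar coordinates is given by r = R(θ). Let f : closure(P) → ℝ be a convex continuous function with minimum value 0 attained at the origin. Then ∫_P f dμ ≤ (1/3) ∫₀^{2π} f(R(θ),θ) R(θ)² dθ, where dμ is Lebesgue measure. -/
/-!
Since `f` is convex and vanishes at the origin, on each ray it lies below the chord from the
origin to the boundary: `f (r, θ) ≤ (r / R θ) f (R θ, θ)` for `0 ≤ r ≤ R θ`. In polar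
coordinates the right-hand side integrates to `∫₀^{R θ} r · (r / R θ) dr · f (R θ, θ) =
(R θ)² f (R θ, θ) / 3` on the ray `θ`.
-/

open MeasureTheory Real Set

/-- The point with polar coordinates `(r, θ)` in the plane. -/
noncomputable def polarPt (r θ : ℝ) : Fin 2 → ℝ := ![r * Real.cos θ, r * Real.sin θ]

open Filter Topology

theorem ConvexOn.map_smul_le_of_map_zero {𝕜 E β : Type*} [Ring 𝕜] [PartialOrder 𝕜]
    [IsOrderedRing 𝕜] [AddCommGroup E] [Module 𝕜 E] [AddCommGroup β] [PartialOrder β]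
    [Module 𝕜 β] {s : Set E} {f : E → β} (hf : ConvexOn 𝕜 s f) (h0 : (0 : E) ∈ s)
    (hf0 : f 0 = 0) {x : E} (hx : x ∈ s) {t : 𝕜} (ht0 : 0 ≤ t) (ht1 : t ≤ 1) :
    f (t • x) ≤ t • f x := by
  simpa [hf0] using hf.2 hx h0 ht0 (sub_nonneg.mpr ht1) (add_sub_cancel t 1)

theorem continuous_polarPt : Continuous fun p : ℝ × ℝ => polarPt p.1 p.2 := by
  unfold polarPt
  apply continuous_pi
  intro i
  fin_cases i <;> simp <;> fun_prop

theorem polarPt_mul (c r θ : ℝ) : polarPt (c * r) θ = c • polarPt r θ := by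
  funext i
  fin_cases i <;> simp [polarPt] <;> ring

theorem polarPt_add_two_pi (r θ : ℝ) : polarPt r (θ + 2 * π) = polarPt r θ := by
  simp only [polarPt, cos_add_two_pi, sin_add_two_pi]

theorem finTwoArrow_symm_polarCoord_symm (p : ℝ × ℝ) :
    MeasurableEquiv.finTwoArrow.symm (polarCoord.symm p) = polarPt p.1 p.2 := by
  funext i
  fin_cases i <;> rfl

theorem integral_comp_polarPt (g : (Fin 2 → ℝ) → ℝ) :
    ∫ p in polarCoord.target, p.1 * g (polarPt p.1 p.2) = ∫ x, g x := by
  have h := integral_comp_polarCoord_symm (g ∘ MeasurableEquiv.finTwoArrow.symm)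
  simp only [Function.comp_apply, finTwoArrow_symm_polarCoord_symm, smul_eq_mul] at h
  rw [h]
  exact (volume_preserving_finTwoArrow ℝ).symm.integral_comp' g

theorem Function.Periodic.integral_Ioo_neg_pi_pi {G : ℝ → ℝ}
    (hG : Function.Periodic G (2 * π)) :
    ∫ θ in Ioo (-π) π, G θ = ∫ θ in (0 : ℝ)..(2 * π), G θ := by
  rw [← integral_Ioc_eq_integral_Ioo, ← intervalIntegral.integral_of_le (by linarith [pi_pos]),
    ← zero_add (2 * π), ← hG.intervalIntegral_add_eq (-π) 0]
  ring_nf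

/-- In polar coordinates `(r, θ)`: the Jacobian `r` times the function that is linear on the
ray `θ`, from `0` at the origin to `F θ` at radius `R θ`, and vanishes beyond. -/
noncomputable def coneDensity (R F : ℝ → ℝ) : ℝ × ℝ → ℝ :=
  {p : ℝ × ℝ | p.1 < R p.2}.indicator fun p => p.1 ^ 2 * (F p.2 / R p.2)

section RadialFunction

variable {P : Set (Fin 2 → ℝ)} {R : ℝ → ℝ}

theorem periodic_of_forall_polarPt_mem_iff (hRpos : ∀ θ, 0 < R θ)
    (hpolar : ∀ r θ : ℝ, 0 ≤ r → (polarPt r θ ∈ P ↔ r < R θ)) :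
    Function.Periodic R (2 * π) := by
  intro θ
  have hiff : ∀ r : ℝ, 0 ≤ r → (r < R (θ + 2 * π) ↔ r < R θ) := fun r hr => by
    rw [← hpolar r _ hr, polarPt_add_two_pi, hpolar r θ hr]
  refine le_antisymm (not_lt.mp fun h => ?_) (not_lt.mp fun h => ?_)
  · exact lt_irrefl _ ((hiff _ (hRpos θ).le).mp h)
  · exact lt_irrefl _ ((hiff _ (hRpos _).le).mpr h)

theorem polarPt_mem_closure (hRpos : ∀ θ, 0 < R θ)
    (hpolar : ∀ r θ : ℝ, 0 ≤ r → (polarPt r θ ∈ P ↔ r < R θ)) (θ : ℝ) :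
    polarPt (R θ) θ ∈ closure P := by
  have hray : Tendsto (fun r => polarPt r θ) (𝓝[<] R θ) (𝓝 (polarPt (R θ) θ)) :=
    ((continuous_polarPt.comp (continuous_id.prodMk continuous_const)).tendsto _).mono_left
      nhdsWithin_le_nhds
  refine mem_closure_of_tendsto hray ?_
  filter_upwards [Ioo_mem_nhdsLT (hRpos θ)] with r hr
  exact (hpolar r θ hr.1.le).mpr hr.2

theorem integral_Ioi_coneDensity (F : ℝ → ℝ) {θ : ℝ} (hR : 0 < R θ) :
    ∫ r in Ioi 0, coneDensity R F (r, θ) = F θ * R θ ^ 2 / 3 := by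
  have hray : (fun r => coneDensity R F (r, θ)) =
      (Iio (R θ)).indicator fun r => r ^ 2 * (F θ / R θ) := by
    funext r
    simp [coneDensity, indicator_apply]
  rw [hray, setIntegral_indicator measurableSet_Iio, Ioi_inter_Iio,
    ← integral_Ioc_eq_integral_Ioo, ← intervalIntegral.integral_of_le hR.le,
    intervalIntegral.integral_mul_const, integral_pow]
  field_simp
  ring

theorem integrableOn_coneDensity {F : ℝ → ℝ} (hRcont : Continuous R)
    (hRpos : ∀ θ, 0 < R θ) (hFcont : Continuous F) :
    IntegrableOn (coneDensity R F) polarCoord.target := by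
  obtain ⟨M, hM⟩ := (isCompact_Icc (a := -π) (b := π)).exists_bound_of_continuousOn
    hRcont.continuousOn
  have hprofile : Continuous fun p : ℝ × ℝ => p.1 ^ 2 * (F p.2 / R p.2) :=
    (continuous_fst.pow 2).mul ((hFcont.comp continuous_snd).div (hRcont.comp continuous_snd)
      fun p => (hRpos p.2).ne')
  have hK : IntegrableOn (coneDensity R F) (Icc (0 : ℝ) M ×ˢ Icc (-π) π) :=
    (hprofile.continuousOn.integrableOn_compact (isCompact_Icc.prod isCompact_Icc)).indicator
      (measurableSet_lt measurable_fst (hRcont.measurable.comp measurable_snd))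
  refine hK.of_forall_sdiff_eq_zero polarCoord.open_target.measurableSet fun p hp => ?_
  obtain ⟨⟨hp1, hp2⟩, hpK⟩ := hp
  have hMp : M < p.1 := not_le.mp fun h => hpK ⟨⟨le_of_lt hp1, h⟩, Ioo_subset_Icc_self hp2⟩
  have hRM : R p.2 ≤ M := (le_abs_self _).trans (by simpa using hM p.2 (Ioo_subset_Icc_self hp2))
  exact indicator_of_notMem (s := {p : ℝ × ℝ | p.1 < R p.2}) (not_lt.mpr (hRM.trans hMp.le)) _

theorem setIntegral_coneDensity {F : ℝ → ℝ} (hRcont : Continuous R) (hRpos : ∀ θ, 0 < R θ)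
    (hFcont : Continuous F) :
    ∫ p in polarCoord.target, coneDensity R F p =
      ∫ θ in Ioo (-π) π, F θ * R θ ^ 2 / 3 := by
  have hint := integrableOn_coneDensity hRcont hRpos hFcont
  have htarget : polarCoord.target = Ioi 0 ×ˢ Ioo (-π) π := rfl
  rw [IntegrableOn, htarget, Measure.volume_eq_prod, ← Measure.prod_restrict] at hint
  rw [htarget, Measure.volume_eq_prod, ← Measure.prod_restrict, integral_prod_symm _ hint]
  exact setIntegral_congr_fun measurableSet_Ioo fun θ _ => integral_Ioi_coneDensity F (hRpos θ)

theorem mul_indicator_polarPt_le_coneDensity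
    (hpolar : ∀ r θ : ℝ, 0 ≤ r → (polarPt r θ ∈ P ↔ r < R θ))
    {g : (Fin 2 → ℝ) → ℝ} {F : ℝ → ℝ}
    (hg : ∀ r θ, 0 < r → r < R θ → g (polarPt r θ) ≤ r / R θ * F θ)
    {p : ℝ × ℝ} (hp : 0 < p.1) :
    p.1 * P.indicator g (polarPt p.1 p.2) ≤ coneDensity R F p := by
  by_cases hpR : p.1 < R p.2
  · rw [indicator_of_mem ((hpolar _ _ hp.le).mpr hpR), coneDensity,
      indicator_of_mem (show p ∈ {p : ℝ × ℝ | p.1 < R p.2} from hpR)]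
    calc p.1 * g (polarPt p.1 p.2) ≤ p.1 * (p.1 / R p.2 * F p.2) :=
          mul_le_mul_of_nonneg_left (hg _ _ hp hpR) hp.le
      _ = p.1 ^ 2 * (F p.2 / R p.2) := by ring
  · rw [indicator_of_notMem (mt (hpolar _ _ hp.le).mp hpR), coneDensity,
      indicator_of_notMem (show p ∉ {p : ℝ × ℝ | p.1 < R p.2} from hpR), mul_zero]

theorem setIntegral_le_of_le_radial (hPmeas : MeasurableSet P) (hRcont : Continuous R)
    (hRpos : ∀ θ, 0 < R θ)
    (hpolar : ∀ r θ : ℝ, 0 ≤ r → (polarPt r θ ∈ P ↔ r < R θ))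
    {g : (Fin 2 → ℝ) → ℝ} {F : ℝ → ℝ} (hFcont : Continuous F)
    (hg0 : ∀ x ∈ P, 0 ≤ g x)
    (hg : ∀ r θ, 0 < r → r < R θ → g (polarPt r θ) ≤ r / R θ * F θ) :
    ∫ x in P, g x ≤ ∫ θ in Ioo (-π) π, F θ * R θ ^ 2 / 3 := by
  rw [← integral_indicator hPmeas, ← integral_comp_polarPt,
    ← setIntegral_coneDensity hRcont hRpos hFcont]
  have hpos : ∀ᵐ p ∂volume.restrict polarCoord.target, 0 < p.1 :=
    (ae_restrict_iff' polarCoord.open_target.measurableSet).mpr (.of_forall fun p hp => hp.1)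
  refine integral_mono_of_nonneg ?_ (integrableOn_coneDensity hRcont hRpos hFcont) ?_
  · filter_upwards [hpos] with p hp
    exact mul_nonneg hp.le (indicator_nonneg hg0 _)
  · filter_upwards [hpos] with p hp
    exact mul_indicator_polarPt_le_coneDensity hpolar hg hp

end RadialFunction

theorem stmt0_general (P : Set (Fin 2 → ℝ)) (hPopen : IsOpen P)
    (h0P : (0 : Fin 2 → ℝ) ∈ P)
    (R : ℝ → ℝ) (hRpos : ∀ θ, 0 < R θ) (hRcont : Continuous R)
    (hpolar : ∀ r θ : ℝ, 0 ≤ r → (polarPt r θ ∈ P ↔ r < R θ))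
    (f : (Fin 2 → ℝ) → ℝ) (hfconv : ConvexOn ℝ (closure P) f)
    (hfcont : ContinuousOn f (closure P)) (hf0 : f 0 = 0)
    (hfnonneg : ∀ x ∈ closure P, 0 ≤ f x) :
    ∫ x in P, f x ∂volume ≤
      (1/3) * ∫ θ in (0:ℝ)..(2*π), f (polarPt (R θ) θ) * (R θ)^2 := by
  have hbdry := polarPt_mem_closure hRpos hpolar
  have hFcont : Continuous fun θ => f (polarPt (R θ) θ) :=
    hfcont.comp_continuous (continuous_polarPt.comp (hRcont.prodMk continuous_id)) hbdry
  have hchord : ∀ r θ, 0 < r → r < R θ →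
      f (polarPt r θ) ≤ r / R θ * f (polarPt (R θ) θ) := by
    intro r θ hr hrR
    have hRθ := hRpos θ
    have h := hfconv.map_smul_le_of_map_zero (subset_closure h0P) hf0 (hbdry θ)
      (div_nonneg hr.le hRθ.le) ((div_le_one hRθ).mpr hrR.le)
    rwa [← polarPt_mul, div_mul_cancel₀ r hRθ.ne'] at h
  have hper : Function.Periodic (fun θ => f (polarPt (R θ) θ) * R θ ^ 2 / 3) (2 * π) := by
    intro θ
    simp only [periodic_of_forall_polarPt_mem_iff hRpos hpolar θ, polarPt_add_two_pi]
  calc ∫ x in P, f x ≤ ∫ θ in Ioo (-π) π, f (polarPt (R θ) θ) * R θ ^ 2 / 3 :=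
        setIntegral_le_of_le_radial hPopen.measurableSet hRcont hRpos hpolar hFcont
          (fun x hx => hfnonneg x (subset_closure hx)) hchord
    _ = ∫ θ in (0 : ℝ)..(2 * π), f (polarPt (R θ) θ) * R θ ^ 2 / 3 :=
        hper.integral_Ioo_neg_pi_pi
    _ = _ := by rw [intervalIntegral.integral_div]; ring

/-- Donaldson, "Extremal metrics on toric surfaces, I", proof of Lemma 1:
for a bounded convex polygon `P` with centre of mass the origin, boundary given in polar
coordinates by `r = R(θ)`, and `f` convex, continuous, nonnegative on the closure of `P`
with minimum value `0` at the origin, one has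
`∫_P f dμ ≤ (1/3) ∫₀^{2π} f(R(θ),θ) R(θ)² dθ`. -/
theorem stmt0 (P : Set (Fin 2 → ℝ)) (hPconv : Convex ℝ P) (hPopen : IsOpen P)
    (hPbdd : Bornology.IsBounded P) (h0P : (0 : Fin 2 → ℝ) ∈ P)
    (hcent : ∫ x in P, x ∂volume = 0)
    (R : ℝ → ℝ) (hRpos : ∀ θ, 0 < R θ) (hRcont : Continuous R)
    (hpolar : ∀ r θ : ℝ, 0 ≤ r → (polarPt r θ ∈ P ↔ r < R θ))
    (f : (Fin 2 → ℝ) → ℝ) (hfconv : ConvexOn ℝ (closure P) f)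
    (hfcont : ContinuousOn f (closure P)) (hf0 : f 0 = 0)
    (hfnonneg : ∀ x ∈ closure P, 0 ≤ f x) :
    ∫ x in P, f x ∂volume ≤
      (1/3) * ∫ θ in (0:ℝ)..(2*π), f (polarPt (R θ) θ) * (R θ)^2 :=
  stmt0_general P hPopen h0P R hRpos hRcont hpolar f hfconv hfcont hf0 hfnonneg
end

section
/- Let u be a smooth convex function on a convex open set Ω ⊂ ℝⁿ satisfying the M-condition. If p, p' are points such that p' and 2p − p' both lie in Ω (i.e. p is the midpoint of a segment with endpoint p' contained in Ω), then the Riemannian length of the straight segment from p' to p, measured in the metric g = Hess(u), is at most (√2 − 1)^{-1} √M √|p − p'|, where |p − p'| is the Euclidean distance. -/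
open Set

/-- The M-condition of Donaldson, "Extremal metrics on toric surfaces, I", Definition 1:
for all `p ≠ q` in `Ω` such that the segment `I(p,q) = {(p+q)/2 + t(p−q) : |t| ≤ 3/2}`
lies in `Ω`, the increment of the directional derivative of `u` from `p` to `q` in the unit
direction `ν` from `p` to `q` is at most `M`. -/
def MCondition {n : ℕ} (M : ℝ) (Ω : Set (EuclideanSpace ℝ (Fin n)))
    (u : EuclideanSpace ℝ (Fin n) → ℝ) : Prop :=
  ∀ p q : EuclideanSpace ℝ (Fin n), p ∈ Ω → q ∈ Ω → p ≠ q →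
    (∀ t : ℝ, t ∈ Icc (-(3/2) : ℝ) (3/2) → (1/2 : ℝ) • (p + q) + t • (p - q) ∈ Ω) →
    fderiv ℝ u q (‖q - p‖⁻¹ • (q - p)) - fderiv ℝ u p (‖q - p‖⁻¹ • (q - p)) ≤ M

lemma auxSqrtOpt {L A B : ℝ} (hA : 0 ≤ A) (hB : 0 < B)
    (h : ∀ c : ℝ, 0 < c → L ≤ A / (2 * c) + c * B / 2) :
    L ≤ Real.sqrt A * Real.sqrt B := by
  rcases eq_or_lt_of_le hA with hA0 | hApos
  · have hL : L ≤ 0 := by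
      by_contra hL
      push_neg at hL
      have := h (L / B) (div_pos hL hB)
      rw [← hA0] at this
      simp only [zero_div] at this
      rw [div_mul_eq_mul_div, mul_div_assoc, div_self hB.ne', mul_one] at this
      linarith
    exact hL.trans (mul_nonneg (Real.sqrt_nonneg _) (Real.sqrt_nonneg _))
  · set sa := Real.sqrt A with hsa
    set sb := Real.sqrt B with hsb
    have hsa2 : sa ^ 2 = A := Real.sq_sqrt hA
    have hsb2 : sb ^ 2 = B := Real.sq_sqrt hB.le
    have hsapos : 0 < sa := Real.sqrt_pos.mpr hApos
    have hsbpos : 0 < sb := Real.sqrt_pos.mpr hB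
    have := h (sa / sb) (div_pos hsapos hsbpos)
    have key : A / (2 * (sa / sb)) + (sa / sb) * B / 2 = sa * sb := by
      field_simp
      nlinarith
    linarith [key ▸ this]

lemma auxSlopeNonneg {F : ℝ → ℝ} {a b t d : ℝ}
    (hmono : ∀ x ∈ Icc a b, ∀ y ∈ Icc a b, x ≤ y → F x ≤ F y)
    (ht : t ∈ Icc a b) (htb : t < b) (hd : HasDerivAt F d t) : 0 ≤ d := by
  have hslope : Filter.Tendsto (slope F t) (nhdsWithin t (Ioi t)) (nhds d) := by
    have h1 : Filter.Tendsto (slope F t) (nhdsWithin t {t}ᶜ) (nhds d) :=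
      hasDerivAt_iff_tendsto_slope.mp hd
    exact h1.mono_left (nhdsWithin_mono _ (fun x hx => ne_of_gt hx))
  refine ge_of_tendsto hslope ?_
  filter_upwards [Ioo_mem_nhdsGT htb] with y hy
  have hyI : y ∈ Icc a b := ⟨ht.1.trans hy.1.le, hy.2.le⟩
  have := hmono t ht y hyI hy.1.le
  rw [slope_def_field]
  exact div_nonneg (by linarith) (by linarith [hy.1])

lemma auxSqrtPow (m : ℕ) : Real.sqrt ((1/2 : ℝ) ^ m) = (Real.sqrt (1/2)) ^ m := by
  have h2 : ((Real.sqrt (1/2)) ^ m) ^ 2 = (1/2 : ℝ) ^ m := by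
    rw [← pow_mul, mul_comm, pow_mul, Real.sq_sqrt (by norm_num)]
  rw [← h2, Real.sqrt_sq (pow_nonneg (Real.sqrt_nonneg _) m)]

lemma auxGeom (N : ℕ) :
    (∑ k ∈ Finset.range N, (Real.sqrt (1/2)) ^ (k + 1)) ≤ (Real.sqrt 2 - 1)⁻¹ := by
  set r := Real.sqrt (1/2) with hr
  have h2 : Real.sqrt 2 ^ 2 = 2 := Real.sq_sqrt (by norm_num)
  have hs1 : 1 < Real.sqrt 2 := by
    nlinarith [Real.sqrt_nonneg 2]
  have hrval : r = (Real.sqrt 2)⁻¹ := by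
    rw [hr, show (1/2 : ℝ) = 2⁻¹ by norm_num, Real.sqrt_inv]
  have hr0 : 0 < r := by rw [hrval]; positivity
  have hr1 : r < 1 := by
    rw [hrval]
    rw [inv_lt_one_iff₀]; right; exact hs1
  have hsum : ∑ k ∈ Finset.range N, r ^ (k+1) = r * ∑ k ∈ Finset.range N, r ^ k := by
    rw [Finset.mul_sum]
    exact Finset.sum_congr rfl fun k _ => by ring
  have hgeom : ∑ k ∈ Finset.range N, r ^ k ≤ (1 - r)⁻¹ := by
    rw [geom_sum_eq (ne_of_lt hr1), div_le_iff_of_neg (by linarith : r - 1 < 0)]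
    have e : (1 - r)⁻¹ * (r - 1) = -1 := by
      rw [inv_mul_eq_div, div_eq_iff (by linarith : (1:ℝ) - r ≠ 0)]
      ring
    rw [e]
    linarith [pow_nonneg hr0.le N]
  have hle : ∑ k ∈ Finset.range N, r ^ (k+1) ≤ r * (1 - r)⁻¹ := by
    rw [hsum]
    exact mul_le_mul_of_nonneg_left hgeom hr0.le
  refine hle.trans (le_of_eq ?_)
  have hs0 : (0:ℝ) < Real.sqrt 2 := by linarith
  have key : Real.sqrt 2 * (1 - (Real.sqrt 2)⁻¹) = Real.sqrt 2 - 1 := by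
    rw [mul_sub, mul_inv_cancel₀ hs0.ne', mul_one]
  rw [hrval, ← mul_inv, key]


set_option maxHeartbeats 1000000 in
/-- Donaldson, "Extremal metrics on toric surfaces, I", Lemma 2:
if a smooth convex function `u` on a convex open set `Ω ⊆ ℝⁿ` satisfies the `M`-condition,
and `p' ∈ Ω`, `2p − p' ∈ Ω` (so `p` is the midpoint of a segment with endpoint `p'` in `Ω`),
then the Riemannian length of the straight segment from `p'` to `p` in the Hessian metric
`g = Hess u` is at most `(√2 − 1)⁻¹ √M √|p − p'|`. -/
theorem stmt2 {n : ℕ} (Ω : Set (EuclideanSpace ℝ (Fin n))) (hΩopen : IsOpen Ω)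
    (hΩconv : Convex ℝ Ω) (u : EuclideanSpace ℝ (Fin n) → ℝ)
    (hu : ContDiffOn ℝ (⊤ : ℕ∞) u Ω) (huconv : ConvexOn ℝ Ω u)
    (M : ℝ) (hM : MCondition M Ω u)
    (p p' : EuclideanSpace ℝ (Fin n)) (hp : p ∈ Ω) (hp' : p' ∈ Ω) (hne : p ≠ p')
    (hrefl : (2 : ℝ) • p - p' ∈ Ω) :
    ∫ t in (0:ℝ)..1,
        Real.sqrt (fderiv ℝ (fun y => fderiv ℝ u y (p - p')) (p' + t • (p - p')) (p - p'))
      ≤ (Real.sqrt 2 - 1)⁻¹ * Real.sqrt M * Real.sqrt ‖p - p'‖ := by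
  set v := p - p' with hv
  have hvne : v ≠ 0 := hv ▸ sub_ne_zero.mpr hne
  have hvnorm : (0:ℝ) < ‖v‖ := norm_pos_iff.mpr hvne
  -- segment membership
  have hseg : ∀ t ∈ Icc (0:ℝ) 2, p' + t • v ∈ Ω := by
    intro t ht
    have h1 : (0:ℝ) ≤ 1 - t/2 := by linarith [ht.2]
    have h2 : (0:ℝ) ≤ t/2 := by linarith [ht.1]
    have h3 : (1 - t/2) + t/2 = 1 := by ring
    have hmem := hΩconv hp' hrefl h1 h2 h3
    have heq : (1 - t/2) • p' + (t/2) • ((2:ℝ) • p - p') = p' + t • v := by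
      rw [hv]; module
    rwa [heq] at hmem
  -- differentiability
  have hdiffu : ∀ x ∈ Ω, DifferentiableAt ℝ u x := fun x hx =>
    (hu.differentiableOn (by simp)).differentiableAt (hΩopen.mem_nhds hx)
  have hΦ : ContDiffOn ℝ (⊤ : ℕ∞) (fderiv ℝ u) Ω := hu.fderiv_of_isOpen hΩopen (by simp)
  have hΦdiff : ∀ x ∈ Ω, DifferentiableAt ℝ (fderiv ℝ u) x := fun x hx =>
    (hΦ.differentiableOn (by simp)).differentiableAt (hΩopen.mem_nhds hx)
  have hΨcont : ContinuousOn (fderiv ℝ (fderiv ℝ u)) Ω :=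
    (hΦ.fderiv_of_isOpen (m := (⊤ : ℕ∞)) hΩopen (by simp)).continuousOn
  have hD : ∀ x ∈ Ω, HasFDerivAt (fun y => fderiv ℝ u y v)
      ((fderiv ℝ (fderiv ℝ u) x).flip v) x := by
    intro x hx
    have h1 := (hΦdiff x hx).hasFDerivAt.clm_apply (hasFDerivAt_const v x)
    simpa using h1
  have hGval : ∀ x ∈ Ω, fderiv ℝ (fun y => fderiv ℝ u y v) x v
      = fderiv ℝ (fderiv ℝ u) x v v := by
    intro x hx
    rw [(hD x hx).fderiv]
    rfl
  have hγd : ∀ t : ℝ, HasDerivAt (fun s : ℝ => p' + s • v) v t := by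
    intro t
    simpa using ((hasDerivAt_id t).smul_const v).const_add p'
  have hF : ∀ t : ℝ, p' + t • v ∈ Ω →
      HasDerivAt (fun s => fderiv ℝ u (p' + s • v) v)
        (fderiv ℝ (fderiv ℝ u) (p' + t • v) v v) t := by
    intro t ht
    have := (hD _ ht).comp_hasDerivAt t (hγd t)
    exact this
  -- continuity of the Hessian quadratic form along the segment
  have hγcont : Continuous (fun t : ℝ => p' + t • v) :=
    continuous_const.add (continuous_id.smul continuous_const)
  have hGcont : ContinuousOn (fun t => fderiv ℝ (fderiv ℝ u) (p' + t • v) v v) (Icc (0:ℝ) 2) := by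
    refine ContinuousOn.clm_apply (ContinuousOn.clm_apply ?_ continuousOn_const) continuousOn_const
    exact hΨcont.comp hγcont.continuousOn hseg
  -- convexity of u along the segment
  have hconv : ConvexOn ℝ (Icc (0:ℝ) 2) (fun t => u (p' + t • v)) := by
    refine ⟨convex_Icc _ _, ?_⟩
    intro x hx y hy a b ha hb hab
    have hmem := huconv.2 (hseg x hx) (hseg y hy) ha hb hab
    have heq : a • (p' + x • v) + b • (p' + y • v) = p' + (a * x + b * y) • v := by
      have h1 : a • (p' + x • v) + b • (p' + y • v) = (a + b) • p' + (a * x + b * y) • v := by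
        module
      rw [h1, hab, one_smul]
    rwa [heq] at hmem
  -- u ∘ γ has derivative F
  have hFd : ∀ t : ℝ, p' + t • v ∈ Ω →
      HasDerivAt (fun s => u (p' + s • v)) (fderiv ℝ u (p' + t • v) v) t := by
    intro t ht
    have := ((hdiffu _ ht).hasFDerivAt).comp_hasDerivAt t (hγd t)
    exact this
  -- monotonicity of F on [0,2]
  have hmono : ∀ a ∈ Icc (0:ℝ) 2, ∀ b ∈ Icc (0:ℝ) 2, a ≤ b →
      fderiv ℝ u (p' + a • v) v ≤ fderiv ℝ u (p' + b • v) v := by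
    intro a ha b hb hab
    rcases eq_or_lt_of_le hab with rfl | hlt
    · exact le_refl _
    · have h1 := hconv.le_slope_of_hasDerivAt ha hb hlt (hFd a (hseg a ha))
      have h2 := hconv.slope_le_of_hasDerivAt ha hb hlt (hFd b (hseg b hb))
      linarith
  -- M-condition increment bound
  have hincr : ∀ a b : ℝ, 0 ≤ a → a < b → b ≤ 1 → b ≤ 2*a →
      fderiv ℝ u (p' + b • v) v - fderiv ℝ u (p' + a • v) v ≤ M * ‖v‖ := by
    intro a b ha hab hb1 hba
    have hPΩ : p' + a • v ∈ Ω := hseg a ⟨ha, by linarith⟩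
    have hQΩ : p' + b • v ∈ Ω := hseg b ⟨by linarith, by linarith⟩
    have hQP : (p' + b • v) - (p' + a • v) = (b - a) • v := by module
    have hbane : b - a ≠ 0 := sub_ne_zero.mpr hab.ne'
    have hne' : p' + a • v ≠ p' + b • v := by
      intro h
      have h0 : (b - a) • v = 0 := by rw [← hQP, h, sub_self]
      rcases smul_eq_zero.mp h0 with h1 | h1
      · exact hbane h1
      · exact hvne h1
    have hI : ∀ t : ℝ, t ∈ Icc (-(3/2):ℝ) (3/2) →
        (1/2:ℝ) • ((p' + a • v) + (p' + b • v)) + t • ((p' + a • v) - (p' + b • v)) ∈ Ω := by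
      intro t ht
      have heq : (1/2:ℝ) • ((p' + a • v) + (p' + b • v)) + t • ((p' + a • v) - (p' + b • v))
          = p' + ((a+b)/2 + t*(a-b)) • v := by module
      rw [heq]
      refine hseg _ ⟨?_, ?_⟩
      · nlinarith [ht.1, ht.2]
      · nlinarith [ht.1, ht.2]
    have hMh := hM (p' + a • v) (p' + b • v) hPΩ hQΩ hne' hI
    have hnorm : ‖(p' + b • v) - (p' + a • v)‖ = (b - a) * ‖v‖ := by
      rw [hQP, norm_smul, Real.norm_eq_abs, abs_of_pos (by linarith : (0:ℝ) < b - a)]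
    have hdir : ‖(p' + b • v) - (p' + a • v)‖⁻¹ • ((p' + b • v) - (p' + a • v))
        = ‖v‖⁻¹ • v := by
      rw [hnorm, hQP, smul_smul, mul_inv]
      congr 1
      field_simp
    rw [hdir] at hMh
    have hsmul : v = ‖v‖ • (‖v‖⁻¹ • v) := by
      rw [smul_smul, mul_inv_cancel₀ hvnorm.ne', one_smul]
    have e0 : ∀ x : EuclideanSpace ℝ (Fin n),
        fderiv ℝ u x v = ‖v‖ * fderiv ℝ u x (‖v‖⁻¹ • v) := by
      intro x
      conv_lhs => rw [hsmul]
      rw [map_smul, smul_eq_mul]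
    rw [e0, e0]
    have := mul_le_mul_of_nonneg_left hMh (norm_nonneg v)
    nlinarith
  -- nonnegativity of M
  have hMnn : 0 ≤ M := by
    have h1 := hincr (1/2) 1 (by norm_num) (by norm_num) le_rfl (by norm_num)
    have h2 := hmono (1/2) ⟨by norm_num, by norm_num⟩ 1 ⟨by norm_num, by norm_num⟩ (by norm_num)
    nlinarith
  -- nonnegativity of the Hessian form
  have hG0 : ∀ t ∈ Icc (0:ℝ) 1, 0 ≤ fderiv ℝ (fderiv ℝ u) (p' + t • v) v v := by
    intro t ht
    have htm : t ∈ Icc (0:ℝ) 2 := ⟨ht.1, by linarith [ht.2]⟩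
    exact auxSlopeNonneg (F := fun s => fderiv ℝ u (p' + s • v) v) (a := 0) (b := 2)
      hmono htm (by linarith [ht.2]) (hF t (hseg t htm))
  -- key estimate on a subinterval
  have key : ∀ a b : ℝ, 0 ≤ a → a < b → b ≤ 1 → b ≤ 2*a →
      (∫ t in a..b, Real.sqrt (fderiv ℝ (fderiv ℝ u) (p' + t • v) v v))
        ≤ Real.sqrt (M * ‖v‖) * Real.sqrt (b - a) := by
    intro a b ha hab hb1 hba
    have hsub : Icc a b ⊆ Icc (0:ℝ) 2 := Icc_subset_Icc ha (by linarith)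
    have hGint : IntervalIntegrable (fun t => fderiv ℝ (fderiv ℝ u) (p' + t • v) v v)
        MeasureTheory.volume a b :=
      (hGcont.mono hsub).intervalIntegrable_of_Icc hab.le
    have hsGint : IntervalIntegrable
        (fun t => Real.sqrt (fderiv ℝ (fderiv ℝ u) (p' + t • v) v v))
        MeasureTheory.volume a b :=
      (Real.continuous_sqrt.comp_continuousOn (hGcont.mono hsub)).intervalIntegrable_of_Icc hab.le
    have hFTC : (∫ t in a..b, fderiv ℝ (fderiv ℝ u) (p' + t • v) v v)
        = fderiv ℝ u (p' + b • v) v - fderiv ℝ u (p' + a • v) v := by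
      refine intervalIntegral.integral_eq_sub_of_hasDerivAt
        (f := fun s => fderiv ℝ u (p' + s • v) v) (fun t ht' => ?_) hGint
      rw [uIcc_of_le hab.le] at ht'
      exact hF t (hseg t (hsub ht'))
    refine auxSqrtOpt (mul_nonneg hMnn (norm_nonneg _)) (by linarith : (0:ℝ) < b - a) ?_
    intro c hc
    have hrhsint : IntervalIntegrable
        (fun t => fderiv ℝ (fderiv ℝ u) (p' + t • v) v v / (2*c) + c/2)
        MeasureTheory.volume a b :=
      (hGint.div_const (2*c)).add intervalIntegrable_const
    have step1 : (∫ t in a..b, Real.sqrt (fderiv ℝ (fderiv ℝ u) (p' + t • v) v v))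
        ≤ ∫ t in a..b, (fderiv ℝ (fderiv ℝ u) (p' + t • v) v v / (2*c) + c/2) := by
      refine intervalIntegral.integral_mono_on hab.le hsGint hrhsint (fun t ht' => ?_)
      have hGt0 : 0 ≤ fderiv ℝ (fderiv ℝ u) (p' + t • v) v v :=
        hG0 t ⟨ha.trans ht'.1, ht'.2.trans hb1⟩
      have hs := Real.sq_sqrt hGt0
      have h1 : Real.sqrt (fderiv ℝ (fderiv ℝ u) (p' + t • v) v v)
          ≤ (fderiv ℝ (fderiv ℝ u) (p' + t • v) v v + c^2) / (2*c) := by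
        rw [le_div_iff₀ (by linarith : (0:ℝ) < 2*c)]
        nlinarith [sq_nonneg (Real.sqrt (fderiv ℝ (fderiv ℝ u) (p' + t • v) v v) - c)]
      have h2 : (fderiv ℝ (fderiv ℝ u) (p' + t • v) v v + c^2) / (2*c)
          = fderiv ℝ (fderiv ℝ u) (p' + t • v) v v / (2*c) + c/2 := by
        field_simp
      linarith
    have step2 : (∫ t in a..b, (fderiv ℝ (fderiv ℝ u) (p' + t • v) v v / (2*c) + c/2))
        = (fderiv ℝ u (p' + b • v) v - fderiv ℝ u (p' + a • v) v) / (2*c) + (b-a) * (c/2) := by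
      rw [intervalIntegral.integral_add (hGint.div_const (2*c)) intervalIntegrable_const,
        intervalIntegral.integral_div, hFTC, intervalIntegral.integral_const, smul_eq_mul]
    have step3 := hincr a b ha hab hb1 hba
    have h2c : (0:ℝ) < 2*c := by linarith
    calc (∫ t in a..b, Real.sqrt (fderiv ℝ (fderiv ℝ u) (p' + t • v) v v))
        ≤ (fderiv ℝ u (p' + b • v) v - fderiv ℝ u (p' + a • v) v) / (2*c) + (b-a) * (c/2) := by
          rw [← step2]; exact step1
      _ ≤ M * ‖v‖ / (2*c) + (b-a) * (c/2) := by gcongr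
      _ = M * ‖v‖ / (2*c) + c * (b-a) / 2 := by ring
  -- integrability helper
  have hint : ∀ a b : ℝ, 0 ≤ a → a ≤ b → b ≤ 1 →
      IntervalIntegrable (fun t => Real.sqrt (fderiv ℝ (fderiv ℝ u) (p' + t • v) v v))
        MeasureTheory.volume a b := by
    intro a b ha hab hb1
    exact (Real.continuous_sqrt.comp_continuousOn
      (hGcont.mono (Icc_subset_Icc ha (by linarith)))).intervalIntegrable_of_Icc hab
  -- dyadic induction
  have mainN : ∀ N : ℕ,
      (∫ t in ((1/2:ℝ)^N)..1, Real.sqrt (fderiv ℝ (fderiv ℝ u) (p' + t • v) v v))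
        ≤ (∑ k ∈ Finset.range N, (Real.sqrt (1/2))^(k+1)) * Real.sqrt (M * ‖v‖) := by
    intro N
    induction N with
    | zero => simp
    | succ N ih =>
      have hpos : (0:ℝ) < (1/2:ℝ)^(N+1) := by positivity
      have h2a : 2 * (1/2:ℝ)^(N+1) = (1/2:ℝ)^N := by rw [pow_succ]; ring
      have hb : (1/2:ℝ)^(N+1) < (1/2:ℝ)^N := by
        rw [pow_succ]
        nlinarith [pow_pos (by norm_num : (0:ℝ) < 1/2) N]
      have hbN1 : (1/2:ℝ)^N ≤ 1 := by
        apply pow_le_one₀ <;> norm_num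
      have haN1 : (1/2:ℝ)^(N+1) ≤ 1 := by
        apply pow_le_one₀ <;> norm_num
      have hsplit := intervalIntegral.integral_add_adjacent_intervals
        (hint ((1/2:ℝ)^(N+1)) ((1/2:ℝ)^N) hpos.le hb.le hbN1)
        (hint ((1/2:ℝ)^N) 1 (by positivity) hbN1 le_rfl)
      have hkey := key ((1/2:ℝ)^(N+1)) ((1/2:ℝ)^N) hpos.le hb hbN1 (le_of_eq h2a.symm)
      have hdiff : (1/2:ℝ)^N - (1/2:ℝ)^(N+1) = (1/2:ℝ)^(N+1) := by
        rw [pow_succ]; ring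
      rw [hdiff] at hkey
      rw [auxSqrtPow (N+1)] at hkey
      calc (∫ t in ((1/2:ℝ)^(N+1))..1, Real.sqrt (fderiv ℝ (fderiv ℝ u) (p' + t • v) v v))
          = (∫ t in ((1/2:ℝ)^(N+1))..((1/2:ℝ)^N),
              Real.sqrt (fderiv ℝ (fderiv ℝ u) (p' + t • v) v v))
            + (∫ t in ((1/2:ℝ)^N)..1,
              Real.sqrt (fderiv ℝ (fderiv ℝ u) (p' + t • v) v v)) := hsplit.symm
        _ ≤ Real.sqrt (M * ‖v‖) * (Real.sqrt (1/2))^(N+1)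
            + (∑ k ∈ Finset.range N, (Real.sqrt (1/2))^(k+1)) * Real.sqrt (M * ‖v‖) :=
            add_le_add hkey ih
        _ = (∑ k ∈ Finset.range (N+1), (Real.sqrt (1/2))^(k+1)) * Real.sqrt (M * ‖v‖) := by
            rw [Finset.sum_range_succ]; ring
  -- uniform bound on [0,1]
  obtain ⟨C, hC⟩ := (isCompact_Icc (a := (0:ℝ)) (b := 1)).exists_bound_of_continuousOn
    (Real.continuous_sqrt.comp_continuousOn (hGcont.mono (Icc_subset_Icc le_rfl one_le_two)))
  have hC0 : 0 ≤ C := le_trans (norm_nonneg _) (hC 0 (by norm_num))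
  have tail : ∀ N : ℕ,
      (∫ t in (0:ℝ)..((1/2:ℝ)^N), Real.sqrt (fderiv ℝ (fderiv ℝ u) (p' + t • v) v v))
        ≤ C * (1/2:ℝ)^N := by
    intro N
    have h01 : (1/2:ℝ)^N ≤ 1 := by apply pow_le_one₀ <;> norm_num
    have hpos : (0:ℝ) ≤ (1/2:ℝ)^N := by positivity
    calc (∫ t in (0:ℝ)..((1/2:ℝ)^N), Real.sqrt (fderiv ℝ (fderiv ℝ u) (p' + t • v) v v))
        ≤ ∫ _ in (0:ℝ)..((1/2:ℝ)^N), C := by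
          refine intervalIntegral.integral_mono_on hpos (hint 0 _ le_rfl hpos h01)
            intervalIntegrable_const (fun t ht => ?_)
          calc Real.sqrt (fderiv ℝ (fderiv ℝ u) (p' + t • v) v v)
              ≤ ‖Real.sqrt (fderiv ℝ (fderiv ℝ u) (p' + t • v) v v)‖ := le_abs_self _
            _ ≤ C := hC t ⟨ht.1, ht.2.trans h01⟩
      _ = C * (1/2:ℝ)^N := by
          rw [intervalIntegral.integral_const, smul_eq_mul, sub_zero, mul_comm]
  -- combine
  have total : ∀ N : ℕ,
      (∫ t in (0:ℝ)..1, Real.sqrt (fderiv ℝ (fderiv ℝ u) (p' + t • v) v v))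
        ≤ C * (1/2:ℝ)^N + (Real.sqrt 2 - 1)⁻¹ * Real.sqrt (M * ‖v‖) := by
    intro N
    have h01 : (1/2:ℝ)^N ≤ 1 := by apply pow_le_one₀ <;> norm_num
    have hpos : (0:ℝ) ≤ (1/2:ℝ)^N := by positivity
    have hsplit := intervalIntegral.integral_add_adjacent_intervals
      (hint 0 ((1/2:ℝ)^N) le_rfl hpos h01) (hint ((1/2:ℝ)^N) 1 hpos h01 le_rfl)
    rw [← hsplit]
    exact add_le_add (tail N) ((mainN N).trans
      (mul_le_mul_of_nonneg_right (auxGeom N) (Real.sqrt_nonneg _)))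
  have hlim : Filter.Tendsto
      (fun N : ℕ => C * (1/2:ℝ)^N + (Real.sqrt 2 - 1)⁻¹ * Real.sqrt (M * ‖v‖))
      Filter.atTop (nhds ((Real.sqrt 2 - 1)⁻¹ * Real.sqrt (M * ‖v‖))) := by
    have h0 : Filter.Tendsto (fun N : ℕ => (1/2:ℝ)^N) Filter.atTop (nhds 0) :=
      tendsto_pow_atTop_nhds_zero_of_lt_one (by norm_num) (by norm_num)
    have := (h0.const_mul C).add_const ((Real.sqrt 2 - 1)⁻¹ * Real.sqrt (M * ‖v‖))
    simpa using this
  have final : (∫ t in (0:ℝ)..1, Real.sqrt (fderiv ℝ (fderiv ℝ u) (p' + t • v) v v))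
      ≤ (Real.sqrt 2 - 1)⁻¹ * Real.sqrt (M * ‖v‖) :=
    ge_of_tendsto hlim (Filter.Eventually.of_forall total)
  -- rewrite the statement's integrand
  have hcongr : (∫ t in (0:ℝ)..1,
        Real.sqrt (fderiv ℝ (fun y => fderiv ℝ u y v) (p' + t • v) v))
      = ∫ t in (0:ℝ)..1, Real.sqrt (fderiv ℝ (fderiv ℝ u) (p' + t • v) v v) := by
    refine intervalIntegral.integral_congr (fun t ht => ?_)
    rw [uIcc_of_le zero_le_one] at ht
    rw [hGval _ (hseg t ⟨ht.1, ht.2.trans one_le_two⟩)]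
  have goal : (∫ t in (0:ℝ)..1,
        Real.sqrt (fderiv ℝ (fun y => fderiv ℝ u y v) (p' + t • v) v))
      ≤ (Real.sqrt 2 - 1)⁻¹ * Real.sqrt M * Real.sqrt ‖v‖ := by
    rw [hcongr, mul_assoc, ← Real.sqrt_mul hMnn]
    exact final
  exact goal
end

section
/- Let u be a smooth strictly convex function on an open set in ℝ². At any point where the Hessian (u_{ij}) equals the identity matrix, one has ∂²/∂(x¹)² ( u^{11} − (u_{11})^{-1} ) = 2 (u_{112})² / (u_{11}² u_{22}) ≥ 0, where (u^{ij}) denotes the inverse Hessian matrix and subscripts denote partial derivatives. -/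
open Set

/-- `∂²u/∂x¹∂x¹`. -/
noncomputable def d11 (u : ℝ × ℝ → ℝ) (x : ℝ × ℝ) : ℝ :=
  deriv (fun s => deriv (fun t => u (t, x.2)) s) x.1

/-- `∂²u/∂x²∂x²`. -/
noncomputable def d22 (u : ℝ × ℝ → ℝ) (x : ℝ × ℝ) : ℝ :=
  deriv (fun s => deriv (fun t => u (x.1, t)) s) x.2

/-- `∂²u/∂x¹∂x²`. -/
noncomputable def d12 (u : ℝ × ℝ → ℝ) (x : ℝ × ℝ) : ℝ :=
  deriv (fun s => deriv (fun t => u (t, s)) x.1) x.2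

/-- `u_{112} = ∂(u_{11})/∂x²`. -/
noncomputable def d112 (u : ℝ × ℝ → ℝ) (x : ℝ × ℝ) : ℝ :=
  deriv (fun s => d11 u (x.1, s)) x.2


section DonaldsonAux
open ContDiff Filter Topology

noncomputable def Pd1 (f : ℝ × ℝ → ℝ) (x : ℝ × ℝ) : ℝ := fderiv ℝ f x (1, 0)
noncomputable def Pd2 (f : ℝ × ℝ → ℝ) (x : ℝ × ℝ) : ℝ := fderiv ℝ f x (0, 1)

lemma hasDerivAt_fst' (f : ℝ×ℝ→ℝ) (a b : ℝ) (hf : DifferentiableAt ℝ f (a,b)) :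
    HasDerivAt (fun t => f (t, b)) (Pd1 f (a,b)) a := by
  have h := hf.hasFDerivAt.comp_hasDerivAt a ((hasDerivAt_id a).prodMk (hasDerivAt_const a b))
  simpa [Pd1, Function.comp_def] using h

lemma hasDerivAt_snd' (f : ℝ×ℝ→ℝ) (a b : ℝ) (hf : DifferentiableAt ℝ f (a,b)) :
    HasDerivAt (fun s => f (a, s)) (Pd2 f (a,b)) b := by
  have h := hf.hasFDerivAt.comp_hasDerivAt b ((hasDerivAt_const b a).prodMk (hasDerivAt_id b))
  simpa [Pd2, Function.comp_def] using h

lemma contDiffOn_Pd1 {f : ℝ×ℝ→ℝ} {Ω : Set (ℝ×ℝ)} (hf : ContDiffOn ℝ ∞ f Ω) (hΩ : IsOpen Ω) :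
    ContDiffOn ℝ ∞ (Pd1 f) Ω :=
  (ContinuousLinearMap.apply ℝ ℝ ((1:ℝ),(0:ℝ))).contDiff.comp_contDiffOn
    (hf.fderiv_of_isOpen hΩ (by simp))

lemma contDiffOn_Pd2 {f : ℝ×ℝ→ℝ} {Ω : Set (ℝ×ℝ)} (hf : ContDiffOn ℝ ∞ f Ω) (hΩ : IsOpen Ω) :
    ContDiffOn ℝ ∞ (Pd2 f) Ω :=
  (ContinuousLinearMap.apply ℝ ℝ ((0:ℝ),(1:ℝ))).contDiff.comp_contDiffOn
    (hf.fderiv_of_isOpen hΩ (by simp))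

lemma one_le_inf : (∞ : WithTop ℕ∞) ≠ 0 := by simp

lemma schwarz {f : ℝ×ℝ→ℝ} {Ω : Set (ℝ×ℝ)} (hΩ : IsOpen Ω) (hf : ContDiffOn ℝ ∞ f Ω)
    {p : ℝ×ℝ} (hp : p ∈ Ω) : Pd1 (Pd2 f) p = Pd2 (Pd1 f) p := by
  have hev : ∀ᶠ y in 𝓝 p, HasFDerivAt f (fderiv ℝ f y) y := by
    filter_upwards [hΩ.mem_nhds hp] with y hy
    exact ((hf.contDiffAt (hΩ.mem_nhds hy)).differentiableAt one_le_inf).hasFDerivAt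
  have hg' : ContDiffOn ℝ ∞ (fderiv ℝ f) Ω := hf.fderiv_of_isOpen hΩ (by simp)
  have hd : HasFDerivAt (fderiv ℝ f) (fderiv ℝ (fderiv ℝ f) p) p :=
    ((hg'.contDiffAt (hΩ.mem_nhds hp)).differentiableAt one_le_inf).hasFDerivAt
  have hsym := second_derivative_symmetric_of_eventually hev hd ((1:ℝ),(0:ℝ)) ((0:ℝ),(1:ℝ))
  have e1 : Pd1 (Pd2 f) p = (fderiv ℝ (fderiv ℝ f) p (1,0)) (0,1) := by
    have h : HasFDerivAt (Pd2 f)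
        ((ContinuousLinearMap.apply ℝ ℝ ((0:ℝ),(1:ℝ))).comp (fderiv ℝ (fderiv ℝ f) p)) p :=
      (ContinuousLinearMap.apply ℝ ℝ ((0:ℝ),(1:ℝ))).hasFDerivAt.comp p hd
    simp [Pd1, h.fderiv]
  have e2 : Pd2 (Pd1 f) p = (fderiv ℝ (fderiv ℝ f) p (0,1)) (1,0) := by
    have h : HasFDerivAt (Pd1 f)
        ((ContinuousLinearMap.apply ℝ ℝ ((1:ℝ),(0:ℝ))).comp (fderiv ℝ (fderiv ℝ f) p)) p :=
      (ContinuousLinearMap.apply ℝ ℝ ((1:ℝ),(0:ℝ))).hasFDerivAt.comp p hd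
    simp [Pd2, h.fderiv]
  rw [e1, e2]; exact hsym

lemma mem_h {Ω : Set (ℝ×ℝ)} {x : ℝ×ℝ} (hx : x ∈ Ω) : (x.1, x.2) ∈ Ω := by
  rwa [Prod.mk.eta]

lemma hline {Ω : Set (ℝ×ℝ)} (hΩ : IsOpen Ω) {x : ℝ×ℝ} (hx : x ∈ Ω) :
    {s : ℝ | (s, x.2) ∈ Ω} ∈ 𝓝 x.1 :=
  (hΩ.preimage (continuous_id.prodMk continuous_const)).mem_nhds (mem_h hx)

lemma vline {Ω : Set (ℝ×ℝ)} (hΩ : IsOpen Ω) {x : ℝ×ℝ} (hx : x ∈ Ω) :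
    {s : ℝ | (x.1, s) ∈ Ω} ∈ 𝓝 x.2 :=
  (hΩ.preimage (continuous_const.prodMk continuous_id)).mem_nhds (mem_h hx)

lemma d11_eqP {u : ℝ×ℝ→ℝ} {Ω : Set (ℝ×ℝ)} (hΩ : IsOpen Ω) (hu : ContDiffOn ℝ ∞ u Ω)
    {x : ℝ×ℝ} (hx : x ∈ Ω) : d11 u x = Pd1 (Pd1 u) x := by
  have hev : (fun s => deriv (fun t => u (t, x.2)) s) =ᶠ[𝓝 x.1] (fun s => Pd1 u (s, x.2)) := by
    filter_upwards [hline hΩ hx] with s hs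
    exact (hasDerivAt_fst' u s x.2
      ((hu.contDiffAt (hΩ.mem_nhds hs)).differentiableAt one_le_inf)).deriv
  have h2 : deriv (fun s => Pd1 u (s, x.2)) x.1 = Pd1 (Pd1 u) (x.1, x.2) :=
    (hasDerivAt_fst' (Pd1 u) x.1 x.2
      (((contDiffOn_Pd1 hu hΩ).contDiffAt (hΩ.mem_nhds (mem_h hx))).differentiableAt
        one_le_inf)).deriv
  show deriv (fun s => deriv (fun t => u (t, x.2)) s) x.1 = _
  rw [hev.deriv_eq, h2, Prod.mk.eta]

lemma d22_eqP {u : ℝ×ℝ→ℝ} {Ω : Set (ℝ×ℝ)} (hΩ : IsOpen Ω) (hu : ContDiffOn ℝ ∞ u Ω)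
    {x : ℝ×ℝ} (hx : x ∈ Ω) : d22 u x = Pd2 (Pd2 u) x := by
  have hev : (fun s => deriv (fun t => u (x.1, t)) s) =ᶠ[𝓝 x.2] (fun s => Pd2 u (x.1, s)) := by
    filter_upwards [vline hΩ hx] with s hs
    exact (hasDerivAt_snd' u x.1 s
      ((hu.contDiffAt (hΩ.mem_nhds hs)).differentiableAt one_le_inf)).deriv
  have h2 : deriv (fun s => Pd2 u (x.1, s)) x.2 = Pd2 (Pd2 u) (x.1, x.2) :=
    (hasDerivAt_snd' (Pd2 u) x.1 x.2
      (((contDiffOn_Pd2 hu hΩ).contDiffAt (hΩ.mem_nhds (mem_h hx))).differentiableAt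
        one_le_inf)).deriv
  show deriv (fun s => deriv (fun t => u (x.1, t)) s) x.2 = _
  rw [hev.deriv_eq, h2, Prod.mk.eta]

lemma d12_eqP {u : ℝ×ℝ→ℝ} {Ω : Set (ℝ×ℝ)} (hΩ : IsOpen Ω) (hu : ContDiffOn ℝ ∞ u Ω)
    {x : ℝ×ℝ} (hx : x ∈ Ω) : d12 u x = Pd2 (Pd1 u) x := by
  have hev : (fun s => deriv (fun t => u (t, s)) x.1) =ᶠ[𝓝 x.2] (fun s => Pd1 u (x.1, s)) := by
    filter_upwards [vline hΩ hx] with s hs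
    exact (hasDerivAt_fst' u x.1 s
      ((hu.contDiffAt (hΩ.mem_nhds hs)).differentiableAt one_le_inf)).deriv
  have h2 : deriv (fun s => Pd1 u (x.1, s)) x.2 = Pd2 (Pd1 u) (x.1, x.2) :=
    (hasDerivAt_snd' (Pd1 u) x.1 x.2
      (((contDiffOn_Pd1 hu hΩ).contDiffAt (hΩ.mem_nhds (mem_h hx))).differentiableAt
        one_le_inf)).deriv
  show deriv (fun s => deriv (fun t => u (t, s)) x.1) x.2 = _
  rw [hev.deriv_eq, h2, Prod.mk.eta]

lemma keycalc (A B C : ℝ → ℝ) (x : ℝ)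
    (hA : ∀ᶠ t in 𝓝 x, ContDiffAt ℝ ∞ A t)
    (hB : ∀ᶠ t in 𝓝 x, ContDiffAt ℝ ∞ B t)
    (hC : ∀ᶠ t in 𝓝 x, ContDiffAt ℝ ∞ C t)
    (hA1 : A x = 1) (hB1 : B x = 1) (hC0 : C x = 0) :
    deriv (fun s => deriv (fun t => B t / (A t * B t - C t ^ 2) - (A t)⁻¹) s) x
      = 2 * (deriv C x) ^ 2 := by
  obtain ⟨U, hUall, hUo, hUx⟩ := eventually_nhds_iff.1 ((hA.and (hB.and hC)))
  have hUn : U ∈ 𝓝 x := hUo.mem_nhds hUx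
  have hAU : ContDiffOn ℝ ∞ A U := fun t ht => ((hUall t ht).1).contDiffWithinAt
  have hBU : ContDiffOn ℝ ∞ B U := fun t ht => ((hUall t ht).2.1).contDiffWithinAt
  have hCU : ContDiffOn ℝ ∞ C U := fun t ht => ((hUall t ht).2.2).contDiffWithinAt
  have hA'U : ContDiffOn ℝ ∞ (deriv A) U := hAU.deriv_of_isOpen hUo (by simp)
  have hB'U : ContDiffOn ℝ ∞ (deriv B) U := hBU.deriv_of_isOpen hUo (by simp)
  have hC'U : ContDiffOn ℝ ∞ (deriv C) U := hCU.deriv_of_isOpen hUo (by simp)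
  have one_le : (∞ : WithTop ℕ∞) ≠ 0 := by simp
  have hAne : ∀ᶠ t in 𝓝 x, A t ≠ 0 :=
    ((hUall x hUx).1.continuousAt).eventually_ne (by rw [hA1]; norm_num)
  have hDne : ∀ᶠ t in 𝓝 x, A t * B t - C t ^ 2 ≠ 0 := by
    have hc : ContinuousAt (fun t => A t * B t - C t ^ 2) x :=
      (((hUall x hUx).1.continuousAt).mul ((hUall x hUx).2.1.continuousAt)).sub
        (((hUall x hUx).2.2.continuousAt).pow 2)
    exact hc.eventually_ne (by rw [hA1, hB1, hC0]; norm_num)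
  have hstep1 : (fun s => deriv (fun t => B t / (A t * B t - C t ^ 2) - (A t)⁻¹) s) =ᶠ[𝓝 x]
      (fun t => (deriv B t * (A t * B t - C t ^ 2) -
          B t * (deriv A t * B t + A t * deriv B t - 2 * C t * deriv C t)) /
          (A t * B t - C t ^ 2) ^ 2 - -deriv A t / A t ^ 2) := by
    filter_upwards [hUn, hAne, hDne] with t htU htA htD
    have hAt : HasDerivAt A (deriv A t) t := ((hUall t htU).1.differentiableAt one_le).hasDerivAt
    have hBt : HasDerivAt B (deriv B t) t := ((hUall t htU).2.1.differentiableAt one_le).hasDerivAt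
    have hCt : HasDerivAt C (deriv C t) t := ((hUall t htU).2.2.differentiableAt one_le).hasDerivAt
    have hC2 : HasDerivAt (fun t => C t ^ 2) (2 * C t * deriv C t) t := by
      simpa using hCt.fun_pow 2
    have hDt : HasDerivAt (fun t => A t * B t - C t ^ 2)
        (deriv A t * B t + A t * deriv B t - 2 * C t * deriv C t) t := (hAt.mul hBt).sub hC2
    exact ((hBt.div hDt htD).sub (hAt.inv htA)).deriv
  rw [hstep1.deriv_eq]
  have hAx : HasDerivAt A (deriv A x) x := ((hUall x hUx).1.differentiableAt one_le).hasDerivAt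
  have hBx : HasDerivAt B (deriv B x) x := ((hUall x hUx).2.1.differentiableAt one_le).hasDerivAt
  have hCx : HasDerivAt C (deriv C x) x := ((hUall x hUx).2.2.differentiableAt one_le).hasDerivAt
  have hA'x : HasDerivAt (deriv A) (deriv (deriv A) x) x :=
    (((hA'U.contDiffAt hUn)).differentiableAt one_le).hasDerivAt
  have hB'x : HasDerivAt (deriv B) (deriv (deriv B) x) x :=
    (((hB'U.contDiffAt hUn)).differentiableAt one_le).hasDerivAt
  have hC'x : HasDerivAt (deriv C) (deriv (deriv C) x) x :=
    (((hC'U.contDiffAt hUn)).differentiableAt one_le).hasDerivAt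
  have hAx0 : A x ≠ 0 := by rw [hA1]; norm_num
  have hDx0 : A x * B x - C x ^ 2 ≠ 0 := by rw [hA1, hB1, hC0]; norm_num
  have hC2x : HasDerivAt (fun t => C t ^ 2) (2 * C x * deriv C x) x := by
    simpa using hCx.fun_pow 2
  have hDd : HasDerivAt (fun t => A t * B t - C t ^ 2)
      (deriv A x * B x + A x * deriv B x - 2 * C x * deriv C x) x := (hAx.mul hBx).sub hC2x
  have hDDd : HasDerivAt (fun t => deriv A t * B t + A t * deriv B t - 2 * C t * deriv C t)
      ((deriv (deriv A) x * B x + deriv A x * deriv B x) +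
        (deriv A x * deriv B x + A x * deriv (deriv B) x) -
        (2 * deriv C x * deriv C x + 2 * C x * deriv (deriv C) x)) x :=
    ((hA'x.mul hBx).add (hAx.mul hB'x)).sub ((hCx.const_mul 2).mul hC'x)
  have hfrac1 := ((hB'x.mul hDd).sub (hBx.mul hDDd)).div (hDd.pow 2) (pow_ne_zero 2 hDx0)
  have hfrac2 := (hA'x.neg).div (hAx.pow 2) (pow_ne_zero 2 hAx0)
  refine ((hfrac1.sub hfrac2).deriv).trans ?_
  simp only [Pi.mul_apply, Pi.sub_apply, Pi.pow_apply, Pi.neg_apply, Pi.div_apply]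
  rw [hA1, hB1, hC0]
  norm_num
  ring


end DonaldsonAux

open ContDiff Filter Topology

/-- Donaldson, "Extremal metrics on toric surfaces, I", computation in the proof of Lemma 3:
for a smooth strictly convex `u` on an open set in `ℝ²`, at a point where the Hessian is the
identity matrix (`u₁₁ = u₂₂ = 1`, `u₁₂ = 0`) one has
`(∂/∂x¹)² (u^{11} − u₁₁⁻¹) = 2 u₁₁₂² / (u₁₁² u₂₂) ≥ 0`, where
`u^{11} = u₂₂/(u₁₁u₂₂ − u₁₂²)` is the `(1,1)` entry of the inverse Hessian. -/
theorem stmt4 (Ω : Set (ℝ × ℝ)) (hΩ : IsOpen Ω) (u : ℝ × ℝ → ℝ)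
    (hu : ContDiffOn ℝ (⊤ : ℕ∞) u Ω)
    (hpd : ∀ x ∈ Ω, 0 < d11 u x ∧ 0 < d11 u x * d22 u x - (d12 u x)^2)
    (p : ℝ × ℝ) (hp : p ∈ Ω)
    (h11 : d11 u p = 1) (h22 : d22 u p = 1) (h12 : d12 u p = 0) :
    deriv (fun s => deriv (fun t =>
        d22 u (t, p.2) / (d11 u (t, p.2) * d22 u (t, p.2) - (d12 u (t, p.2))^2)
          - (d11 u (t, p.2))⁻¹) s) p.1
      = 2 * (d112 u p)^2 / ((d11 u p)^2 * d22 u p) ∧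
    0 ≤ 2 * (d112 u p)^2 / ((d11 u p)^2 * d22 u p) := by
  have hu' : ContDiffOn ℝ ∞ u Ω := hu.of_le (by simp)
  have hRHS : (2 : ℝ) * (d112 u p)^2 / ((d11 u p)^2 * d22 u p) = 2 * (d112 u p)^2 := by
    rw [h11, h22]; norm_num
  have hSopen : IsOpen {s : ℝ | (s, p.2) ∈ Ω} :=
    hΩ.preimage (continuous_id.prodMk continuous_const)
  have hSp : p.1 ∈ {s : ℝ | (s, p.2) ∈ Ω} := mem_h hp
  have hTopen : IsOpen {s : ℝ | (p.1, s) ∈ Ω} :=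
    hΩ.preimage (continuous_const.prodMk continuous_id)
  have hTp : p.2 ∈ {s : ℝ | (p.1, s) ∈ Ω} := mem_h hp
  constructor
  · rw [hRHS]
    have hAev : ∀ᶠ t in 𝓝 p.1, ContDiffAt ℝ ∞ (fun t => d11 u (t, p.2)) t := by
      filter_upwards [hSopen.mem_nhds hSp] with t ht
      have hsm : ContDiffAt ℝ ∞ (fun t : ℝ => Pd1 (Pd1 u) (t, p.2)) t :=
        ((contDiffOn_Pd1 (contDiffOn_Pd1 hu' hΩ) hΩ).contDiffAt (hΩ.mem_nhds ht)).comp t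
          ((contDiff_id.prodMk contDiff_const).contDiffAt)
      refine hsm.congr_of_eventuallyEq ?_
      filter_upwards [hSopen.mem_nhds ht] with s hs
      exact d11_eqP hΩ hu' hs
    have hBev : ∀ᶠ t in 𝓝 p.1, ContDiffAt ℝ ∞ (fun t => d22 u (t, p.2)) t := by
      filter_upwards [hSopen.mem_nhds hSp] with t ht
      have hsm : ContDiffAt ℝ ∞ (fun t : ℝ => Pd2 (Pd2 u) (t, p.2)) t :=
        ((contDiffOn_Pd2 (contDiffOn_Pd2 hu' hΩ) hΩ).contDiffAt (hΩ.mem_nhds ht)).comp t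
          ((contDiff_id.prodMk contDiff_const).contDiffAt)
      refine hsm.congr_of_eventuallyEq ?_
      filter_upwards [hSopen.mem_nhds ht] with s hs
      exact d22_eqP hΩ hu' hs
    have hCev : ∀ᶠ t in 𝓝 p.1, ContDiffAt ℝ ∞ (fun t => d12 u (t, p.2)) t := by
      filter_upwards [hSopen.mem_nhds hSp] with t ht
      have hsm : ContDiffAt ℝ ∞ (fun t : ℝ => Pd2 (Pd1 u) (t, p.2)) t :=
        ((contDiffOn_Pd2 (contDiffOn_Pd1 hu' hΩ) hΩ).contDiffAt (hΩ.mem_nhds ht)).comp t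
          ((contDiff_id.prodMk contDiff_const).contDiffAt)
      refine hsm.congr_of_eventuallyEq ?_
      filter_upwards [hSopen.mem_nhds ht] with s hs
      exact d12_eqP hΩ hu' hs
    have hA1 : (fun t => d11 u (t, p.2)) p.1 = 1 := by
      show d11 u (p.1, p.2) = 1; rw [Prod.mk.eta]; exact h11
    have hB1 : (fun t => d22 u (t, p.2)) p.1 = 1 := by
      show d22 u (p.1, p.2) = 1; rw [Prod.mk.eta]; exact h22
    have hC0 : (fun t => d12 u (t, p.2)) p.1 = 0 := by
      show d12 u (p.1, p.2) = 0; rw [Prod.mk.eta]; exact h12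
    have hkey := keycalc _ _ _ p.1 hAev hBev hCev hA1 hB1 hC0
    refine hkey.trans ?_
    have hc : deriv (fun t => d12 u (t, p.2)) p.1 = d112 u p := by
      have h1 : (fun t => d12 u (t, p.2)) =ᶠ[𝓝 p.1] (fun t => Pd2 (Pd1 u) (t, p.2)) := by
        filter_upwards [hSopen.mem_nhds hSp] with s hs
        exact d12_eqP hΩ hu' hs
      have h2 : deriv (fun t => Pd2 (Pd1 u) (t, p.2)) p.1 = Pd1 (Pd2 (Pd1 u)) (p.1, p.2) :=
        (hasDerivAt_fst' (Pd2 (Pd1 u)) p.1 p.2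
          (((contDiffOn_Pd2 (contDiffOn_Pd1 hu' hΩ) hΩ).contDiffAt
            (hΩ.mem_nhds (mem_h hp))).differentiableAt one_le_inf)).deriv
      have h3 : Pd1 (Pd2 (Pd1 u)) (p.1, p.2) = Pd2 (Pd1 (Pd1 u)) (p.1, p.2) := by
        rw [Prod.mk.eta]; exact schwarz hΩ (contDiffOn_Pd1 hu' hΩ) hp
      have h4 : (fun s => d11 u (p.1, s)) =ᶠ[𝓝 p.2] (fun s => Pd1 (Pd1 u) (p.1, s)) := by
        filter_upwards [hTopen.mem_nhds hTp] with s hs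
        exact d11_eqP hΩ hu' hs
      have h5 : deriv (fun s => Pd1 (Pd1 u) (p.1, s)) p.2 = Pd2 (Pd1 (Pd1 u)) (p.1, p.2) :=
        (hasDerivAt_snd' (Pd1 (Pd1 u)) p.1 p.2
          (((contDiffOn_Pd1 (contDiffOn_Pd1 hu' hΩ) hΩ).contDiffAt
            (hΩ.mem_nhds (mem_h hp))).differentiableAt one_le_inf)).deriv
      have h6 : d112 u p = Pd2 (Pd1 (Pd1 u)) (p.1, p.2) := by
        show deriv (fun s => d11 u (p.1, s)) p.2 = _
        rw [h4.deriv_eq, h5]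
      rw [h1.deriv_eq, h2, h3, ← h6]
    rw [hc]
  · rw [h11, h22]; positivity
end

section
/- Let H : [−R, R] → (0, ∞) be a smooth function with ∫_{−R}^{R} H(t) dt ≤ M and (d²/dt²)(H(t)^{-1}) ≤ 1 for all t. Then H(0) ≤ max( 2M/(πR), 2(M/π)² ). -/
open Set Real

set_option maxHeartbeats 1000000

lemma aux_arctan_lower {z : ℝ} (h0 : 0 ≤ z) (h1 : z ≤ 1) : π / 4 * z ≤ arctan z := by
  have hconc : ConcaveOn ℝ (Icc (0:ℝ) 1) arctan := by
    apply concaveOn_of_hasDerivWithinAt2_nonpos (f' := fun x => 1 / (1 + x ^ 2))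
      (f'' := fun x => -(2 * x) / (1 + x ^ 2) ^ 2) (convex_Icc 0 1)
      (continuous_arctan.continuousOn)
    · intro x hx
      exact (hasDerivAt_arctan x).hasDerivWithinAt
    · intro x hx
      have h1 : HasDerivAt (fun x : ℝ => 1 + x ^ 2) (2 * x) x := by
        simpa using ((hasDerivAt_pow 2 x).const_add 1)
      have hne : (1 + x ^ 2 : ℝ) ≠ 0 := by positivity
      have := h1.inv hne
      simpa [one_div, div_eq_mul_inv, Pi.inv_def] using this.hasDerivWithinAt
    · intro x hx
      rw [interior_Icc] at hx
      have : (0:ℝ) ≤ 2 * x := by nlinarith [hx.1]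
      apply div_nonpos_of_nonpos_of_nonneg (by linarith) (by positivity)
  have := hconc.2 (show (0:ℝ) ∈ Icc (0:ℝ) 1 by norm_num)
    (show (1:ℝ) ∈ Icc (0:ℝ) 1 by norm_num)
    (show (0:ℝ) ≤ 1 - z by linarith) h0 (show (1-z) + z = 1 by ring)
  simp only [smul_eq_mul, arctan_zero, arctan_one, mul_zero, zero_add, mul_one] at this
  linarith

/-- Donaldson, "Extremal metrics on toric surfaces, I", proof of Lemma 4:
if `H > 0` is smooth on `[−R, R]` with `∫_{−R}^{R} H ≤ M` and `(H⁻¹)'' ≤ 1`, then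
`H(0) ≤ max( 2M/(πR), 2(M/π)² )`. -/
theorem stmt6 (R M : ℝ) (hR : 0 < R) (H : ℝ → ℝ) (hH : ContDiff ℝ (⊤ : ℕ∞) H)
    (hpos : ∀ t ∈ Icc (-R) R, 0 < H t)
    (hint : ∫ t in (-R)..R, H t ≤ M)
    (hconc : ∀ t ∈ Icc (-R) R, deriv (deriv (fun s => (H s)⁻¹)) t ≤ 1) :
    H 0 ≤ max (2 * M / (π * R)) (2 * (M / π)^2) := by
  -- a neighborhood of Icc (-R) R where H is positive
  have hU : IsOpen {x : ℝ | 0 < H x} := isOpen_lt continuous_const hH.continuous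
  obtain ⟨δ₁, hδ₁pos, hδ₁⟩ := Metric.mem_nhds_iff.1
    (hU.mem_nhds (show (0:ℝ) < H (-R) from hpos _ ⟨le_refl _, by linarith⟩))
  obtain ⟨δ₂, hδ₂pos, hδ₂⟩ := Metric.mem_nhds_iff.1
    (hU.mem_nhds (show (0:ℝ) < H R from hpos _ ⟨by linarith, le_refl _⟩))
  set δ := min δ₁ δ₂ with hδdef
  have hδpos : 0 < δ := lt_min hδ₁pos hδ₂pos
  set a := R + δ with ha
  set s : Set ℝ := Ioo (-a) a with hs
  have hsopen : IsOpen s := isOpen_Ioo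
  have hsub : Icc (-R) R ⊆ s := fun x hx => ⟨by simp only [hs, ha]; linarith [hx.1],
    by simp only [hs, ha]; linarith [hx.2]⟩
  have hHpos : ∀ x ∈ s, 0 < H x := by
    intro x hx
    rcases le_or_gt x (-R) with h | h
    · rcases eq_or_lt_of_le h with h' | h'
      · exact h' ▸ hpos _ ⟨le_refl _, by linarith⟩
      · refine hδ₁ ?_
        rw [Metric.mem_ball, Real.dist_eq, abs_of_nonpos (by linarith)]
        have := hx.1
        simp only [hs, ha, mem_Ioo] at hx
        have : -R - δ₁ < x := by
          have := min_le_left δ₁ δ₂; linarith [hx.1]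
        linarith
    · rcases le_or_gt x R with h2 | h2
      · exact hpos _ ⟨h.le, h2⟩
      · refine hδ₂ ?_
        rw [Metric.mem_ball, Real.dist_eq, abs_of_nonneg (by linarith)]
        simp only [hs, ha, mem_Ioo] at hx
        have := min_le_right δ₁ δ₂
        linarith [hx.2]
  have hsymm : ∀ x ∈ s, -x ∈ s := by
    intro x hx; simp only [hs, mem_Ioo] at hx ⊢; constructor <;> linarith [hx.1, hx.2]
  set g : ℝ → ℝ := fun s => (H s)⁻¹ with hgdef
  have hgcd : ContDiffOn ℝ (⊤ : ℕ∞) g s := (hH.contDiffOn).inv (fun x hx => (hHpos x hx).ne')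
  have hg1 : ∀ x ∈ s, HasDerivAt g (deriv g x) x := fun x hx =>
    ((hgcd.differentiableOn (by simp)).differentiableAt (hsopen.mem_nhds hx)).hasDerivAt
  have hgd : ContDiffOn ℝ (⊤ : ℕ∞) (deriv g) s := hgcd.deriv_of_isOpen hsopen (by simp)
  have hg2 : ∀ x ∈ s, HasDerivAt (deriv g) (deriv (deriv g) x) x := fun x hx =>
    ((hgd.differentiableOn (by simp)).differentiableAt (hsopen.mem_nhds hx)).hasDerivAt
  set dψ : ℝ → ℝ := fun t => 2*t - deriv g t + deriv g (-t) with hdψdef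
  set ψ : ℝ → ℝ := fun t => 2 * g 0 + t^2 - g t - g (-t) with hψdef
  have hdψ : ∀ x ∈ s, HasDerivAt ψ (dψ x) x := by
    intro x hx
    have h1 : HasDerivAt (fun t : ℝ => g (-t)) (deriv g (-x) * (-1)) x :=
      (hg1 (-x) (hsymm x hx)).comp x (hasDerivAt_neg x)
    have h2 : HasDerivAt (fun t : ℝ => 2 * g 0 + t^2) (2*x) x := by
      simpa using ((hasDerivAt_pow 2 x).const_add (2 * g 0))
    have h3 : HasDerivAt (fun t => 2 * g 0 + t ^ 2 - g t - g (-t))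
        (2 * x - deriv g x - deriv g (-x) * -1) x := (h2.sub (hg1 x hx)).sub h1
    convert h3 using 1
    ring
  have hddψ : ∀ x ∈ s, HasDerivAt dψ (2 - deriv (deriv g) x - deriv (deriv g) (-x)) x := by
    intro x hx
    have h1 : HasDerivAt (fun t : ℝ => deriv g (-t)) (deriv (deriv g) (-x) * (-1)) x :=
      (hg2 (-x) (hsymm x hx)).comp x (hasDerivAt_neg x)
    have h2 : HasDerivAt (fun t : ℝ => 2 * t) 2 x := by
      simpa using (hasDerivAt_id x).const_mul (2:ℝ)
    have h3 : HasDerivAt (fun t => 2 * t - deriv g t + deriv g (-t))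
        (2 - deriv (deriv g) x + deriv (deriv g) (-x) * -1) x := (h2.sub (hg2 x hx)).add h1
    convert h3 using 1
    ring
  have hIccsub : Icc (0:ℝ) R ⊆ s := fun x hx => hsub ⟨by linarith [hx.1], hx.2⟩
  have hmono1 : MonotoneOn dψ (Icc 0 R) := by
    apply monotoneOn_of_deriv_nonneg (convex_Icc 0 R)
    · exact fun x hx => (hddψ x (hIccsub hx)).continuousAt.continuousWithinAt
    · intro x hx
      rw [interior_Icc] at hx
      exact (hddψ x (hIccsub (Ioo_subset_Icc_self hx))).differentiableAt.differentiableWithinAt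
    · intro x hx
      rw [interior_Icc] at hx
      have hx1 : x ∈ Icc (-R) R := ⟨by linarith [hx.1], hx.2.le⟩
      have hx2 : -x ∈ Icc (-R) R := ⟨by linarith [hx.2], by linarith [hx.1]⟩
      rw [(hddψ x (hIccsub (Ioo_subset_Icc_self hx))).deriv]
      have c1 := hconc x hx1
      have c2 := hconc (-x) hx2
      linarith
  have hdψ0 : dψ 0 = 0 := by simp [hdψdef]
  have hdψnn : ∀ t ∈ Icc (0:ℝ) R, 0 ≤ dψ t := by
    intro t ht
    have := hmono1 ⟨le_refl 0, hR.le⟩ ht ht.1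
    linarith [hdψ0 ▸ this]
  have hmono2 : MonotoneOn ψ (Icc 0 R) := by
    apply monotoneOn_of_deriv_nonneg (convex_Icc 0 R)
    · exact fun x hx => (hdψ x (hIccsub hx)).continuousAt.continuousWithinAt
    · intro x hx
      rw [interior_Icc] at hx
      exact (hdψ x (hIccsub (Ioo_subset_Icc_self hx))).differentiableAt.differentiableWithinAt
    · intro x hx
      rw [interior_Icc] at hx
      rw [(hdψ x (hIccsub (Ioo_subset_Icc_self hx))).deriv]
      exact hdψnn x (Ioo_subset_Icc_self hx)
  have hψ0 : ψ 0 = 0 := by simp [hψdef]; ring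
  have key : ∀ t ∈ Icc (0:ℝ) R, g t + g (-t) ≤ 2 * g 0 + t ^ 2 := by
    intro t ht
    have := hmono2 ⟨le_refl 0, hR.le⟩ ht ht.1
    rw [hψ0] at this
    simp only [hψdef] at this
    linarith
  set ε : ℝ := g 0 with hεdef
  have hH0pos : 0 < H 0 := hpos 0 ⟨by linarith, hR.le⟩
  have hε : 0 < ε := by simp only [hεdef, hgdef]; positivity
  have hH0 : H 0 = ε⁻¹ := by simp [hεdef, hgdef]
  have hpt : ∀ t ∈ Icc (0:ℝ) R, 4 / (2*ε + t^2) ≤ H t + H (-t) := by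
    intro t ht
    have htI : t ∈ Icc (-R) R := ⟨by linarith [ht.1], ht.2⟩
    have hmtI : -t ∈ Icc (-R) R := ⟨by linarith [ht.2], by linarith [ht.1]⟩
    have hat : 0 < g t := by simp only [hgdef]; exact inv_pos.2 (hpos t htI)
    have hbt : 0 < g (-t) := by simp only [hgdef]; exact inv_pos.2 (hpos _ hmtI)
    have hsum := key t ht
    have hHt : H t = (g t)⁻¹ := by simp [hgdef]
    have hHmt : H (-t) = (g (-t))⁻¹ := by simp [hgdef]
    rw [hHt, hHmt]
    have hden : 0 < 2*ε + t^2 := by positivity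
    have e : ((g t)⁻¹ + (g (-t))⁻¹) * (g t + g (-t)) - 4
        = (g t - g (-t))^2 / (g t * g (-t)) := by
      field_simp
      ring
    have h4 : 4 ≤ ((g t)⁻¹ + (g (-t))⁻¹) * (g t + g (-t)) := by
      have h5 : 0 ≤ (g t - g (-t))^2 / (g t * g (-t)) :=
        div_nonneg (sq_nonneg _) (mul_pos hat hbt).le
      linarith [e ▸ h5]
    rw [div_le_iff₀ hden]
    calc (4:ℝ) ≤ ((g t)⁻¹ + (g (-t))⁻¹) * (g t + g (-t)) := h4
      _ ≤ ((g t)⁻¹ + (g (-t))⁻¹) * (2*ε + t^2) :=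
        mul_le_mul_of_nonneg_left hsum (by positivity)
  -- integral manipulations
  have hHc : Continuous H := hH.continuous
  have hi1 : IntervalIntegrable H MeasureTheory.volume (-R) 0 := hHc.intervalIntegrable _ _
  have hi2 : IntervalIntegrable H MeasureTheory.volume 0 R := hHc.intervalIntegrable _ _
  have hi3 : IntervalIntegrable (fun t => H (-t)) MeasureTheory.volume 0 R :=
    (hHc.comp continuous_neg).intervalIntegrable _ _
  have hsplit : ∫ t in (0:ℝ)..R, (H t + H (-t)) ≤ M := by
    have e1 : ∫ t in (0:ℝ)..R, H (-t) = ∫ t in (-R)..(0:ℝ), H t := by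
      rw [intervalIntegral.integral_comp_neg (f := H)]
      norm_num
    rw [intervalIntegral.integral_add hi2 hi3, e1,
      ← intervalIntegral.integral_add_adjacent_intervals hi1 hi2] at *
    linarith [hint]
  -- lower bound for the integral
  set c : ℝ := Real.sqrt (2*ε) with hcdef
  have hc : 0 < c := Real.sqrt_pos.2 (by linarith)
  have hc2 : c^2 = 2*ε := Real.sq_sqrt (by linarith)
  have hcont4 : Continuous (fun t : ℝ => 4 / (2*ε + t^2)) := by
    apply continuous_const.div (continuous_const.add (continuous_pow 2))
    intro x; simp only [Pi.add_apply]; positivity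
  have hF : ∀ t : ℝ, HasDerivAt (fun t => 4/c * arctan (t/c)) (4/(2*ε + t^2)) t := by
    intro t
    have h1 : HasDerivAt (fun t : ℝ => t / c) (1/c) t := by
      simpa using (hasDerivAt_id t).div_const c
    have h2 : HasDerivAt (fun t => 4/c * arctan (t/c)) (4 / c * (1 / (1 + (t / c) ^ 2) * (1 / c))) t :=
      ((hasDerivAt_arctan (t/c)).comp t h1).const_mul (4/c)
    convert h2 using 1
    have hcne : c ≠ 0 := hc.ne'
    have hne : (2*ε + t^2) ≠ 0 := by positivity
    field_simp
    nlinarith [hc2]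
  have hval : ∫ t in (0:ℝ)..R, 4/(2*ε + t^2) = 4/c * arctan (R/c) := by
    rw [intervalIntegral.integral_eq_sub_of_hasDerivAt (fun t _ => hF t)
      (hcont4.intervalIntegrable _ _)]
    simp
  have hMlow : 4/c * arctan (R/c) ≤ M := by
    rw [← hval]
    refine le_trans (intervalIntegral.integral_mono_on hR.le
      (hcont4.intervalIntegrable _ _) (hi2.add hi3) hpt) hsplit
  have harct : 0 < arctan (R/c) := by
    have := arctan_strictMono (show (0:ℝ) < R/c by positivity)
    rwa [arctan_zero] at this
  have hM0 : 0 < M := lt_of_lt_of_le (by positivity) hMlow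
  by_cases hcase : c ≤ R
  · -- second branch of the max
    have h1 : (1:ℝ) ≤ R / c := (one_le_div hc).2 hcase
    have h2 : π/4 ≤ arctan (R/c) := by
      rw [← arctan_one]; exact arctan_strictMono.monotone h1
    have h3 : 4/c * (π/4) ≤ M :=
      le_trans (mul_le_mul_of_nonneg_left h2 (by positivity)) hMlow
    have h4 : π ≤ M * c := by
      have h5 : π / c ≤ M := by
        calc π/c = 4/c*(π/4) := by ring
        _ ≤ M := h3
      rwa [div_le_iff₀ hc] at h5
    have h5 : π^2 ≤ M^2 * (2*ε) := by nlinarith [pi_pos, hc, hc2]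
    have h6 : H 0 ≤ 2*(M/π)^2 := by
      rw [hH0, show (2*((M:ℝ)/π)^2) = 2*M^2/π^2 by rw [div_pow]; ring,
        inv_eq_one_div, div_le_div_iff₀ hε (by positivity : (0:ℝ) < π^2)]
      nlinarith [h5]
    exact le_trans h6 (le_max_right _ _)
  · push_neg at hcase
    have h0z : 0 < R / c := by positivity
    have h1z : R / c ≤ 1 := by rw [div_le_one hc]; linarith
    have h2 : π/4 * (R/c) ≤ arctan (R/c) := aux_arctan_lower h0z.le h1z
    have h3 : 4/c * (π/4 * (R/c)) ≤ M :=
      le_trans (mul_le_mul_of_nonneg_left h2 (by positivity)) hMlow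
    have h4 : π * R / (2*ε) ≤ M := by
      have e : 4/c * (π/4 * (R/c)) = π * R / c^2 := by
        field_simp
      rw [e, hc2] at h3
      exact h3
    have h6 : H 0 ≤ 2*M/(π*R) := by
      rw [hH0, inv_eq_one_div, div_le_div_iff₀ hε (by positivity : (0:ℝ) < π*R)]
      rw [div_le_iff₀ (by positivity : (0:ℝ) < 2*ε)] at h4
      nlinarith
    exact le_trans h6 (le_max_left _ _)
end

section
/- Let R(t) be a continuous symmetric k×k matrix-valued function on an interval (0,a) with R(t) ≥ −I (in the sense of quadratic forms, equivalently all eigenvalues of R(t) are ≥ −1). Let ε₁(t), …, ε_k(t) be ℝᵏ-valued solutions of the Jacobi equation ε'' = −R ε which are linearly independent at each point of (0,a) and satisfy the symmetry condition ⟨ε_i', ε_j⟩ = ⟨ε_i, ε_j'⟩ for all i,j,t. Then t ↦ |ε₁(t)| / sinh(t) is non-increasing on (0,a). -/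
/-!
Let `E(t)` be the operator with columns `εᵢ(t)`. The symmetry condition says that `E'ᵀE` is
symmetric, hence so is `S = E'E⁻¹`, and the Jacobi equation gives the Riccati equation
`S' + S² = -R`. For a fixed `v ≠ 0`, Cauchy–Schwarz and `R ≥ -1` turn this into
`h' ≤ 1 - h²` for `h = ⟨Sv, v⟩/|v|²`, and comparison with the barriers `coth (t - τ) + δ`,
which blow up at `τ > 0`, gives `h ≤ coth t`. For `v = ε₁ = E e₁` we have `Sv = ε₁'`, so
`⟨ε₁', ε₁⟩ ≤ coth t · |ε₁|²`, which says that `|ε₁|² / sinh² t` is non-increasing.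
-/

open Set Filter Topology Real
open scoped RealInnerProductSpace Ring

theorem Real.hasDerivAt_cosh_div_sinh {x : ℝ} (hx : x ≠ 0) :
    HasDerivAt (fun x => cosh x / sinh x) (1 - (cosh x / sinh x) ^ 2) x := by
  have hs : sinh x ≠ 0 := sinh_ne_zero.2 hx
  refine ((hasDerivAt_cosh x).div (hasDerivAt_sinh x) hs).congr_deriv ?_
  rw [div_pow, one_sub_div (pow_ne_zero 2 hs)]
  ring

theorem Real.tendsto_cosh_div_sinh_nhdsGT_zero :
    Tendsto (fun x => cosh x / sinh x) (𝓝[>] 0) atTop := by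
  have hsinh : Tendsto sinh (𝓝[>] 0) (𝓝[>] 0) :=
    tendsto_nhdsWithin_of_tendsto_nhds_of_eventually_within _
      (sinh_zero ▸ continuous_sinh.tendsto 0 |>.mono_left nhdsWithin_le_nhds)
      (eventually_nhdsWithin_of_forall fun _ hx => sinh_pos_iff.2 hx)
  have hcosh : Tendsto cosh (𝓝[>] 0) (𝓝 1) :=
    cosh_zero ▸ continuous_cosh.tendsto 0 |>.mono_left nhdsWithin_le_nhds
  simpa only [div_eq_mul_inv, Function.comp_def] using
    hcosh.pos_mul_atTop one_pos (tendsto_inv_nhdsGT_zero.comp hsinh)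

theorem eventually_lt_cosh_div_sinh_sub {h : ℝ → ℝ} {τ : ℝ} (hh : ContinuousAt h τ) :
    ∀ᶠ t in 𝓝[>] τ, h t < cosh (t - τ) / sinh (t - τ) := by
  have hbdd : ∀ᶠ t in 𝓝[>] τ, h t < h τ + 1 :=
    (hh.eventually (gt_mem_nhds (lt_add_one _))).filter_mono nhdsWithin_le_nhds
  have hshift : Tendsto (fun t => t - τ) (𝓝[>] τ) (𝓝[>] 0) :=
    tendsto_nhdsWithin_of_tendsto_nhds_of_eventually_within _
      (sub_self τ ▸ (continuous_sub_right τ).tendsto τ |>.mono_left nhdsWithin_le_nhds)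
      (eventually_nhdsWithin_of_forall fun _ ht => mem_Ioi.2 (sub_pos.2 ht))
  filter_upwards [hbdd, (tendsto_cosh_div_sinh_nhdsGT_zero.comp hshift).eventually_gt_atTop _]
    with t h1 h2 using h1.trans h2

theorem le_cosh_div_sinh_of_hasDerivAt_le {a : ℝ} {h h' : ℝ → ℝ}
    (hd : ∀ t ∈ Ioo 0 a, HasDerivAt h (h' t) t) (hb : ∀ t ∈ Ioo 0 a, h' t ≤ 1 - h t ^ 2) :
    ∀ t ∈ Ioo 0 a, h t ≤ cosh t / sinh t := by
  rintro t₀ ⟨ht₀, ht₀a⟩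
  by_contra! hlt
  set δ := (h t₀ - cosh t₀ / sinh t₀) / 2 with hδ
  have hδpos : 0 < δ := by linarith
  obtain ⟨τ, hτ, hτt₀, hτδ⟩ :
      ∃ τ, 0 < τ ∧ τ < t₀ ∧ cosh (t₀ - τ) / sinh (t₀ - τ) + δ < h t₀ := by
    have hcont : ContinuousAt (fun τ => cosh (t₀ - τ) / sinh (t₀ - τ)) 0 :=
      ContinuousAt.div (by fun_prop) (by fun_prop) (by simpa using (sinh_pos_iff.2 ht₀).ne')
    have hev := hcont.eventually (gt_mem_nhds (show _ < h t₀ - δ by simp only [sub_zero]; linarith))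
    obtain ⟨τ, hτ, hτ'⟩ := ((hev.filter_mono nhdsWithin_le_nhds).and (Ioo_mem_nhdsGT ht₀)).exists
    exact ⟨τ, hτ'.1, hτ'.2, by linarith⟩
  -- `δ > 0` makes `B` a strict supersolution, `B' > 1 - B²`, as the fencing theorem needs
  set B := fun t => cosh (t - τ) / sinh (t - τ) + δ with hB
  have hBd : ∀ t, τ < t → HasDerivAt B (1 - (cosh (t - τ) / sinh (t - τ)) ^ 2) t := fun t ht => by
    simpa [hB] using
      ((hasDerivAt_cosh_div_sinh (sub_ne_zero.2 ht.ne')).comp_sub_const t τ).add_const δ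
  obtain ⟨t₁, ⟨hτt₁, ht₁t₀⟩, ht₁⟩ : ∃ t₁ ∈ Ioo τ t₀, h t₁ < cosh (t₁ - τ) / sinh (t₁ - τ) :=
    ((eventually_lt_cosh_div_sinh_sub (hd τ ⟨hτ, by linarith⟩).continuousAt).and
      (Ioo_mem_nhdsGT hτt₀)).exists.imp fun _ h => ⟨h.2, h.1⟩
  have hsub : Icc t₁ t₀ ⊆ Ioo 0 a := Icc_subset_Ioo (by linarith) ht₀a
  have hfence := image_le_of_deriv_right_lt_deriv_boundary'
    (fun x hx => (hd x (hsub hx)).continuousAt.continuousWithinAt)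
    (fun x hx => (hd x (hsub (Ico_subset_Icc_self hx))).hasDerivWithinAt)
    (show h t₁ ≤ B t₁ by simp only [hB]; linarith)
    (fun x hx => (hBd x (by linarith [hx.1])).continuousAt.continuousWithinAt)
    (fun x hx => (hBd x (by linarith [hx.1])).hasDerivWithinAt)
    (fun x hx hx_eq => by
      have hpos : 0 < cosh (x - τ) / sinh (x - τ) :=
        div_pos (cosh_pos _) (sinh_pos_iff.2 (by linarith [hx.1]))
      have := hb x (hsub (Ico_subset_Icc_self hx))
      rw [hx_eq, hB] at this
      nlinarith)
    (right_mem_Icc.2 ht₁t₀.le)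
  simp only [hB] at hfence
  linarith

section Riccati

variable {V : Type*} [NormedAddCommGroup V] [InnerProductSpace ℝ V]

theorem hasDerivAt_mul_ringInverse [CompleteSpace V] {E E' R : ℝ → V →L[ℝ] V} {t : ℝ}
    (hE : HasDerivAt E (E' t) t) (hE' : HasDerivAt E' (-R t * E t) t) (hunit : IsUnit (E t)) :
    HasDerivAt (fun s => E' s * (E s)⁻¹ʳ) (-R t - E' t * (E t)⁻¹ʳ * (E' t * (E t)⁻¹ʳ)) t := by
  obtain ⟨u, hu⟩ := hunit
  have hinv : HasDerivAt (fun s => (E s)⁻¹ʳ) (-((E t)⁻¹ʳ * E' t * (E t)⁻¹ʳ)) t := by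
    have := (hu ▸ hasFDerivAt_ringInverse (𝕜 := ℝ) u).comp_hasDerivAt t hE
    simpa [← hu, Function.comp_def] using this
  refine (hE'.fun_mul hinv).congr_deriv ?_
  rw [mul_assoc, Ring.mul_inverse_cancel _ ⟨u, hu⟩]
  noncomm_ring

theorem isSymmetric_mul_ringInverse {A B : V →L[ℝ] V} (hA : IsUnit A)
    (h : ∀ x y, ⟪B x, A y⟫ = ⟪A x, B y⟫) : ((B * A⁻¹ʳ : V →L[ℝ] V) : V →ₗ[ℝ] V).IsSymmetric := by
  have hAA (x : V) : A (A⁻¹ʳ x) = x := by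
    change (A * A⁻¹ʳ) x = x
    rw [Ring.mul_inverse_cancel _ hA]
    rfl
  intro v w
  change ⟪B (A⁻¹ʳ v), w⟫ = ⟪v, B (A⁻¹ʳ w)⟫
  simpa only [hAA] using h (A⁻¹ʳ v) (A⁻¹ʳ w)

theorem inner_neg_sub_mul_self_mul_norm_sq_le {R S : V →L[ℝ] V} (hS : (S : V →ₗ[ℝ] V).IsSymmetric)
    {v : V} (hR : -‖v‖ ^ 2 ≤ ⟪R v, v⟫) :
    ⟪(-R - S * S) v, v⟫ * ‖v‖ ^ 2 ≤ ‖v‖ ^ 4 - ⟪S v, v⟫ ^ 2 := by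
  have hSS : ⟪(-R - S * S) v, v⟫ = -⟪R v, v⟫ - ‖S v‖ ^ 2 := by
    have := hS (S v) v
    simp only [ContinuousLinearMap.coe_coe] at this
    simp [inner_sub_left, this]
  have hCS : ⟪S v, v⟫ ^ 2 ≤ ‖S v‖ ^ 2 * ‖v‖ ^ 2 := by
    simpa only [sq, real_inner_self_eq_norm_sq] using real_inner_mul_inner_self_le (S v) v
  rw [hSS]
  nlinarith [sq_nonneg ‖v‖]

theorem inner_le_cosh_div_sinh_mul_norm_sq [CompleteSpace V] {a : ℝ} {E E' R : ℝ → V →L[ℝ] V}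
    (hE : ∀ t ∈ Ioo 0 a, HasDerivAt E (E' t) t)
    (hE' : ∀ t ∈ Ioo 0 a, HasDerivAt E' (-R t * E t) t) (hunit : ∀ t ∈ Ioo 0 a, IsUnit (E t))
    (hsym : ∀ t ∈ Ioo 0 a, ∀ x y, ⟪E' t x, E t y⟫ = ⟪E t x, E' t y⟫)
    (hR : ∀ t ∈ Ioo 0 a, ∀ v, -‖v‖ ^ 2 ≤ ⟪R t v, v⟫) {t : ℝ} (ht : t ∈ Ioo 0 a) (x : V) :
    ⟪E' t x, E t x⟫ ≤ cosh t / sinh t * ‖E t x‖ ^ 2 := by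
  set S := fun s => E' s * (E s)⁻¹ʳ
  set v := E t x
  have hSv : S t v = E' t x := by
    change (E' t * ((E t)⁻¹ʳ * E t)) x = _
    rw [Ring.inverse_mul_cancel _ (hunit t ht)]
    rfl
  rcases eq_or_ne v 0 with hv | hv
  · simp [← hSv, hv]
  have hv2 : 0 < ‖v‖ ^ 2 := by positivity
  have hbound := le_cosh_div_sinh_of_hasDerivAt_le (h := fun s => ⟪S s v, v⟫ / ‖v‖ ^ 2)
    (h' := fun s => ⟪(-R s - S s * S s) v, v⟫ / ‖v‖ ^ 2)
    (fun s hs => by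
      have hS := hasDerivAt_mul_ringInverse (hE s hs) (hE' s hs) (hunit s hs)
      have := ((hS.clm_apply (hasDerivAt_const s v)).inner ℝ (hasDerivAt_const s v)).div_const
        (‖v‖ ^ 2)
      simp only [map_zero, add_zero, zero_add, inner_zero_right] at this
      exact this)
    (fun s hs => by
      have := inner_neg_sub_mul_self_mul_norm_sq_le
        (isSymmetric_mul_ringInverse (hunit s hs) (hsym s hs)) (hR s hs v)
      rw [div_pow, one_sub_div (by positivity), div_le_div_iff₀ hv2 (by positivity)]
      nlinarith)
    t ht
  rwa [hSv, div_le_iff₀ hv2] at hbound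

end Riccati

section LinearCombination

variable {ι V : Type*} [Fintype ι] [NormedAddCommGroup V] [NormedSpace ℝ V]

noncomputable def linearCombinationCLM (v : ι → V) : EuclideanSpace ℝ ι →L[ℝ] V :=
  ∑ i, (EuclideanSpace.proj i).smulRight (v i)

theorem linearCombinationCLM_apply (v : ι → V) (x : EuclideanSpace ℝ ι) :
    linearCombinationCLM v x = ∑ i, x i • v i := by
  simp [linearCombinationCLM]

theorem linearCombinationCLM_single [DecidableEq ι] (v : ι → V) (i : ι) :
    linearCombinationCLM v (EuclideanSpace.single i 1) = v i := by
  simp [linearCombinationCLM_apply]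

theorem comp_linearCombinationCLM {W : Type*} [NormedAddCommGroup W] [NormedSpace ℝ W]
    (A : V →L[ℝ] W) (v : ι → V) :
    A.comp (linearCombinationCLM v) = linearCombinationCLM (fun i => A (v i)) := by
  ext x
  simp [linearCombinationCLM_apply]

theorem hasDerivAt_linearCombinationCLM {v : ι → ℝ → V} {v' : ι → V} {t : ℝ}
    (h : ∀ i, HasDerivAt (v i) (v' i) t) :
    HasDerivAt (fun s => linearCombinationCLM (fun i => v i s)) (linearCombinationCLM v') t :=
  HasDerivAt.fun_sum fun i _ =>
    (ContinuousLinearMap.smulRightL ℝ _ V (EuclideanSpace.proj i)).hasFDerivAt.comp_hasDerivAt t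
      (h i)

theorem inner_linearCombinationCLM_comm {W : Type*} [NormedAddCommGroup W]
    [InnerProductSpace ℝ W] {u v : ι → W} (h : ∀ i j, ⟪u i, v j⟫ = ⟪v i, u j⟫)
    (x y : EuclideanSpace ℝ ι) :
    ⟪linearCombinationCLM u x, linearCombinationCLM v y⟫ =
      ⟪linearCombinationCLM v x, linearCombinationCLM u y⟫ := by
  simp only [linearCombinationCLM_apply, sum_inner, inner_sum, real_inner_smul_left,
    real_inner_smul_right, h]

theorem isUnit_linearCombinationCLM {v : ι → EuclideanSpace ℝ ι} (hv : LinearIndependent ℝ v) :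
    IsUnit (linearCombinationCLM v) := by
  have hinj : Function.Injective ((linearCombinationCLM v : EuclideanSpace ℝ ι →L[ℝ] _) :
      EuclideanSpace ℝ ι →ₗ[ℝ] EuclideanSpace ℝ ι) := by
    refine (injective_iff_map_eq_zero _).2 fun x hx => ?_
    rw [ContinuousLinearMap.coe_coe, linearCombinationCLM_apply] at hx
    ext i
    exact Fintype.linearIndependent_iff.1 hv _ hx i
  rw [ContinuousLinearMap.isUnit_iff_bijective]
  exact ⟨hinj, LinearMap.injective_iff_surjective.1 hinj⟩

end LinearCombination

theorem antitoneOn_norm_div_sinh {V : Type*} [NormedAddCommGroup V] [InnerProductSpace ℝ V]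
    {a : ℝ} {f f' : ℝ → V} (hf : ∀ t ∈ Ioo 0 a, HasDerivAt f (f' t) t)
    (hb : ∀ t ∈ Ioo 0 a, ⟪f' t, f t⟫ ≤ cosh t / sinh t * ‖f t‖ ^ 2) :
    AntitoneOn (fun t => ‖f t‖ / sinh t) (Ioo 0 a) := by
  have hd : ∀ t ∈ Ioo 0 a, HasDerivAt (fun t => ‖f t‖ ^ 2 / sinh t ^ 2)
      ((2 * ⟪f t, f' t⟫ * sinh t ^ 2 - ‖f t‖ ^ 2 * (2 * sinh t * cosh t)) / (sinh t ^ 2) ^ 2) t :=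
    fun t ht => by
      simpa using (hf t ht).norm_sq.fun_div ((hasDerivAt_sinh t).pow 2)
        (pow_ne_zero 2 (sinh_pos_iff.2 ht.1).ne')
  have hsq : AntitoneOn (fun t => ‖f t‖ ^ 2 / sinh t ^ 2) (Ioo 0 a) := by
    refine antitoneOn_of_deriv_nonpos (convex_Ioo 0 a)
      (fun t ht => (hd t ht).continuousAt.continuousWithinAt)
      (fun t ht => (hd t (interior_subset ht)).differentiableAt.differentiableWithinAt)
      (fun t ht => ?_)
    rw [interior_Ioo] at ht
    have hs := sinh_pos_iff.2 ht.1
    have hbt := hb t ht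
    rw [div_mul_eq_mul_div, le_div_iff₀ hs, real_inner_comm] at hbt
    rw [(hd t ht).deriv]
    refine div_nonpos_of_nonpos_of_nonneg ?_ (by positivity)
    nlinarith
  intro x hx y hy hxy
  have hnonneg {t} (ht : t ∈ Ioo 0 a) : 0 ≤ ‖f t‖ / sinh t :=
    div_nonneg (norm_nonneg _) (sinh_pos_iff.2 ht.1).le
  have := hsq hx hy hxy
  simp only [← div_pow] at this
  exact (pow_le_pow_iff_left₀ (hnonneg hy) (hnonneg hx) two_ne_zero).1 this

theorem stmt8_general {k : ℕ} (hk : 0 < k) (a : ℝ)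
    (R : ℝ → EuclideanSpace ℝ (Fin k) →L[ℝ] EuclideanSpace ℝ (Fin k))
    (hRbound : ∀ t ∈ Ioo 0 a, ∀ v : EuclideanSpace ℝ (Fin k), -(‖v‖^2) ≤ ⟪R t v, v⟫)
    (ε : Fin k → ℝ → EuclideanSpace ℝ (Fin k))
    (hdiff : ∀ i, Differentiable ℝ (ε i) ∧ Differentiable ℝ (deriv (ε i)))
    (hjacobi : ∀ i, ∀ t ∈ Ioo 0 a, deriv (deriv (ε i)) t = -(R t (ε i t)))
    (hindep : ∀ t ∈ Ioo 0 a, LinearIndependent ℝ (fun i => ε i t))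
    (hsymsol : ∀ i j, ∀ t ∈ Ioo 0 a, ⟪deriv (ε i) t, ε j t⟫ = ⟪ε i t, deriv (ε j) t⟫) :
    AntitoneOn (fun t => ‖ε ⟨0, hk⟩ t‖ / Real.sinh t) (Ioo 0 a) := by
  set E := fun t => linearCombinationCLM fun i => ε i t
  set E' := fun t => linearCombinationCLM fun i => deriv (ε i) t
  have hE t : HasDerivAt E (E' t) t :=
    hasDerivAt_linearCombinationCLM fun i => ((hdiff i).1 t).hasDerivAt
  have hE' : ∀ t ∈ Ioo 0 a, HasDerivAt E' (-R t * E t) t := fun t ht => by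
    convert hasDerivAt_linearCombinationCLM fun i => ((hdiff i).2 t).hasDerivAt using 1
    rw [funext fun i => hjacobi i t ht]
    exact comp_linearCombinationCLM (-R t) _
  have hbound : ∀ t ∈ Ioo 0 a,
      ⟪deriv (ε ⟨0, hk⟩) t, ε ⟨0, hk⟩ t⟫ ≤ cosh t / sinh t * ‖ε ⟨0, hk⟩ t‖ ^ 2 := fun t ht => by
      simpa [E, E', linearCombinationCLM_single] using inner_le_cosh_div_sinh_mul_norm_sq
        (fun t _ => hE t) hE' (fun t ht => isUnit_linearCombinationCLM (hindep t ht))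
        (fun t ht => inner_linearCombinationCLM_comm fun i j => hsymsol i j t ht) hRbound ht
        (EuclideanSpace.single ⟨0, hk⟩ 1)
  exact antitoneOn_norm_div_sinh (fun t _ => ((hdiff _).1 t).hasDerivAt) hbound

/-- Donaldson, "Extremal metrics on toric surfaces, I", Lemma 5:
let `R(t)` be a continuous symmetric matrix-valued function on `(0,a)` with `R(t) ≥ −I`,
and let `ε₁, …, ε_k` be solutions of the Jacobi equation `ε'' = −Rε`, linearly independent at
each point and satisfying `⟨εᵢ', εⱼ⟩ = ⟨εᵢ, εⱼ'⟩`. Then `t ↦ |ε₁(t)|/sinh t` is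
non-increasing on `(0,a)`. -/
theorem stmt8 {k : ℕ} (hk : 0 < k) (a : ℝ) (ha : 0 < a)
    (R : ℝ → EuclideanSpace ℝ (Fin k) →L[ℝ] EuclideanSpace ℝ (Fin k))
    (hRcont : ContinuousOn R (Ioo 0 a))
    (hRsym : ∀ t ∈ Ioo 0 a, ∀ v w : EuclideanSpace ℝ (Fin k), ⟪R t v, w⟫ = ⟪v, R t w⟫)
    (hRbound : ∀ t ∈ Ioo 0 a, ∀ v : EuclideanSpace ℝ (Fin k), -(‖v‖^2) ≤ ⟪R t v, v⟫)
    (ε : Fin k → ℝ → EuclideanSpace ℝ (Fin k))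
    (hdiff : ∀ i, Differentiable ℝ (ε i) ∧ Differentiable ℝ (deriv (ε i)))
    (hjacobi : ∀ i, ∀ t ∈ Ioo 0 a, deriv (deriv (ε i)) t = -(R t (ε i t)))
    (hindep : ∀ t ∈ Ioo 0 a, LinearIndependent ℝ (fun i => ε i t))
    (hsymsol : ∀ i j, ∀ t ∈ Ioo 0 a, ⟪deriv (ε i) t, ε j t⟫ = ⟪ε i t, deriv (ε j) t⟫) :
    AntitoneOn (fun t => ‖ε ⟨0, hk⟩ t‖ / Real.sinh t) (Ioo 0 a) :=
  stmt8_general hk a R hRbound ε hdiff hjacobi hindep hsymsol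
end
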